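/- arXiv:0904.1150 — 2 statements merged into one kernel-verified Lean document; each statement's English description precedes it below -/
import Mathlib

section
/- Equation (beyondrate): For a non-controllable FSC with a source in 𝒫_v(u,u) (0 ≤ u ≤ v), fix T with u+1 ≤ T ≤ N, and let y^{T-u-1}, ỹ^{T-u-1} be two output histories of positive probability with α_{T-1}(y^{T-u-1}) = α_{T-1}(ỹ^{T-u-1}) such that for every t with T ≤ t ≤ N, every continuation y_{T-u}^{t-u-1} and all arguments, π_t(x_t | x_{t-v}^{t-1}, s_{t-v-1}^{t-u-1}, (y^{T-u-1}, y_{T-u}^{t-u-1})) = π_t(x_t | x_{t-v}^{t-1}, s_{t-v-1}^{t-u-1}, (ỹ^{T-u-1}, y_{T-u}^{t-u-1})). Then Σ_{t=T}^N I(X_{t-v}^t, S_{t-v-1}; Y_t | Y_{T-u}^{t-1}; Y^{T-u-1} = y^{T-u-1}) = Σ_{t=T}^N I(X_{t-v}^t, S_{t-v-1}; Y_t | Y_{T-u}^{t-1}; Y^{T-u-1} = ỹ^{T-u-1}), where I(A;B|C; E) denotes the conditional mutual information of A and B given C computed under the conditional distribution Pr(· | E). -/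
/-!
Common framework: finite-state channels (FSCs), non-controllable FSCs,
sources with delayed feedback (FB) and delayed state information (SI),
induced joint pmfs, conditional probabilities and conditional mutual
information, following Huang–Kavčić–Ma, "Upper Bounds on the Capacities of
Non-Controllable Finite-State Channels with/without Feedback".

Time convention: for a horizon `N`, the channel inputs are `X_1,…,X_N`
(coordinate `x i` of `x : Fin N → X` is `X_{i+1}`), the states are
`S_0,…,S_N` (coordinate `s j` of `s : Fin (N+1) → S` is `S_j`), and the
outputs are `Y_1,…,Y_N` (coordinate `y i` is `Y_{i+1}`).
-/

open Finset

noncomputable section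

namespace FSCPaper

/-- Probability of an event under a pmf `p` on a finite sample space. -/
def prE {Ω : Type} [Fintype Ω] (p : Ω → ℝ) (E : Set Ω) : ℝ :=
  ∑ ω : Ω, E.indicator p ω

/-- Conditional probability `Pr(E | F)`, a ratio of (sums of) marginals
(with the `0/0 = 0` junk-value convention of real division). -/
def condPr {Ω : Type} [Fintype Ω] (p : Ω → ℝ) (E F : Set Ω) : ℝ :=
  prE p (E ∩ F) / prE p F

/-- The conditional pmf `Pr(· | F)` given an event `F`. -/
def condPMF {Ω : Type} [Fintype Ω] (p : Ω → ℝ) (F : Set Ω) : Ω → ℝ :=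
  fun ω => F.indicator p ω / prE p F

/-- Conditional mutual information `I(A;B|C)` of finite-valued random
variables `fA, fB, fC` under the pmf `p`; zero-probability terms
contribute `0` (the factor in front of the logarithm vanishes). -/
def condMI {Ω A B C : Type} [Fintype Ω] [Fintype A] [Fintype B] [Fintype C]
    (p : Ω → ℝ) (fA : Ω → A) (fB : Ω → B) (fC : Ω → C) : ℝ :=
  ∑ a : A, ∑ b : B, ∑ c : C,
    prE p {ω | fA ω = a ∧ fB ω = b ∧ fC ω = c} *
      Real.log (condPr p {ω | fA ω = a ∧ fB ω = b} {ω | fC ω = c} /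
        (condPr p {ω | fA ω = a} {ω | fC ω = c} *
          condPr p {ω | fB ω = b} {ω | fC ω = c}))

/-- Trajectories `(x_1^N, s_0^N, y_1^N)`. -/
abbrev Traj (X S Y : Type) (N : ℕ) : Type :=
  (Fin N → X) × (Fin (N + 1) → S) × (Fin N → Y)

/-- A general finite-state channel: channel transition kernel
`W(y, s' | x, s)` (a pmf on `Y × S` for each `(x,s)`) and initial state
pmf `init`. -/
structure FSC (X S Y : Type) [Fintype S] [Fintype Y] : Type where
  W : Y → S → X → S → ℝ
  init : S → ℝ
  W_nonneg : ∀ y s' x s, 0 ≤ W y s' x s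
  W_sum : ∀ x s, (∑ y : Y, ∑ s' : S, W y s' x s) = 1
  init_nonneg : ∀ s, 0 ≤ init s
  init_sum : (∑ s : S, init s) = 1

/-- A source without feedback: conditional pmfs `π_t(x_t | x^{t-1})`;
`pol t x a` is the probability that `X_{t+1} = a` given that the previous
inputs are the corresponding coordinates of `x` (by `causal` it depends
only on the coordinates `x j` with `j < t`). -/
structure FFSource (X : Type) [Fintype X] (N : ℕ) : Type where
  pol : Fin N → (Fin N → X) → X → ℝ
  nonneg : ∀ t x a, 0 ≤ pol t x a
  sum_one : ∀ t x, (∑ a : X, pol t x a) = 1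
  causal : ∀ (t : Fin N) (x x' : Fin N → X),
    (∀ j : Fin N, (j : ℕ) < (t : ℕ) → x j = x' j) → pol t x = pol t x'

/-- A non-controllable finite-state channel: output kernel `P(y|x,s)`,
free state-transition kernel `Q(s'|s)`, and initial state pmf `init`. -/
structure NCFSC (X S Y : Type) [Fintype S] [Fintype Y] : Type where
  P : Y → X → S → ℝ
  Q : S → S → ℝ
  init : S → ℝ
  P_nonneg : ∀ y x s, 0 ≤ P y x s
  P_sum : ∀ x s, (∑ y : Y, P y x s) = 1
  Q_nonneg : ∀ s' s, 0 ≤ Q s' s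
  Q_sum : ∀ s, (∑ s' : S, Q s' s) = 1
  init_nonneg : ∀ s, 0 ≤ init s
  init_sum : (∑ s : S, init s) = 1

/-- A source with `u`-delayed feedback and `u`-delayed state information
(the set `𝒫(u,u)`): `pol t x s y a` is
`π_{t+1}(a | x^{t}, s_0^{t-u}, y^{t-u})` in 1-based time; by `causal` it
depends on `(x, s, y)` only through the coordinates
`x_1^{t}` (indices `j < t`), `s_0^{t-u}` (indices `j + u ≤ t`) and
`y_1^{t-u}` (indices `j + u + 1 ≤ t`), i.e. on the past inputs, the
`u`-delayed state information and the `u`-delayed output feedback. -/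
structure Source (X S Y : Type) [Fintype X] [Fintype S] [Fintype Y] (N u : ℕ) : Type where
  pol : Fin N → (Fin N → X) → (Fin (N + 1) → S) → (Fin N → Y) → X → ℝ
  nonneg : ∀ t x s y a, 0 ≤ pol t x s y a
  sum_one : ∀ t x s y, (∑ a : X, pol t x s y a) = 1
  causal : ∀ (t : Fin N) (x x' : Fin N → X) (s s' : Fin (N + 1) → S) (y y' : Fin N → Y),
    (∀ j : Fin N, (j : ℕ) < (t : ℕ) → x j = x' j) →
    (∀ j : Fin (N + 1), (j : ℕ) + u ≤ (t : ℕ) → s j = s' j) →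
    (∀ j : Fin N, (j : ℕ) + u + 1 ≤ (t : ℕ) → y j = y' j) →
    pol t x s y = pol t x' s' y'

variable {X S Y : Type} [Fintype X] [Fintype S] [Fintype Y]

/-- Joint pmf induced by a general FSC and a feedforward source:
`Pr(x^N, s_0^N, y^N) = μ(s_0) ∏_t π_t(x_t|x^{t-1}) W(y_t, s_t | x_t, s_{t-1})`. -/
def jointP0 {N : ℕ} (ch : FSC X S Y) (src : FFSource X N) (ω : Traj X S Y N) : ℝ :=
  ch.init (ω.2.1 0) *
    ∏ i : Fin N,
      src.pol i ω.1 (ω.1 i) *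
        ch.W (ω.2.2 i) (ω.2.1 i.succ) (ω.1 i) (ω.2.1 i.castSucc)

/-- Joint channel transition `W(y, s' | x, s) = P(y|x,s) · Q(s'|s)` of a
non-controllable FSC. -/
def NCFSC.W (ch : NCFSC X S Y) (y : Y) (s' : S) (x : X) (s : S) : ℝ :=
  ch.P y x s * ch.Q s' s

/-- Joint pmf induced by a non-controllable FSC and a source in `𝒫(u,u)`:
`Pr(x^N, s_0^N, y^N) = μ(s_0) ∏_t π_t(x_t|x^{t-1},s_0^{t-u-1},y^{t-u-1}) W(y_t,s_t|x_t,s_{t-1})`. -/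
def jointP {N u : ℕ} (ch : NCFSC X S Y) (src : Source X S Y N u) (ω : Traj X S Y N) : ℝ :=
  ch.init (ω.2.1 0) *
    ∏ i : Fin N,
      src.pol i ω.1 ω.2.1 ω.2.2 (ω.1 i) *
        ch.W (ω.2.2 i) (ω.2.1 i.succ) (ω.1 i) (ω.2.1 i.castSucc)

/-- A source in `𝒫(u,u)` is a `v`-th order conditional Markov source
(the set `𝒫_v(u,u)`) if each policy depends on its arguments only through
`(x_{t-v}^{t-1}, s_{t-v-1}^{t-u-1}, y^{t-u-1})` (windows truncated for
small `t`). -/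
def IsMarkov {N u : ℕ} (v : ℕ) (src : Source X S Y N u) : Prop :=
  ∀ (t : Fin N) (x x' : Fin N → X) (s s' : Fin (N + 1) → S) (y y' : Fin N → Y),
    (∀ j : Fin N, (t : ℕ) ≤ (j : ℕ) + v ∧ (j : ℕ) < (t : ℕ) → x j = x' j) →
    (∀ j : Fin (N + 1), (t : ℕ) ≤ (j : ℕ) + v ∧ (j : ℕ) + u ≤ (t : ℕ) → s j = s' j) →
    (∀ j : Fin N, (j : ℕ) + u + 1 ≤ (t : ℕ) → y j = y' j) →
    src.pol t x s y = src.pol t x' s' y'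

/-- `Σ_{t=1}^N I(X^t, S_0^{t-v-1}; Y_t | Y^{t-1})` under the joint law of
the source (state window omitted/truncated when `t - v - 1 < 0`). -/
def objFull {N u : ℕ} (v : ℕ) (ch : NCFSC X S Y) (src : Source X S Y N u) : ℝ :=
  ∑ t : Fin N,
    condMI (jointP ch src)
      (fun ω : Traj X S Y N =>
        ((fun j : {j : Fin N // (j : ℕ) ≤ (t : ℕ)} => ω.1 j.1),
          fun j : {j : Fin (N + 1) // (j : ℕ) + v ≤ (t : ℕ)} => ω.2.1 j.1))
      (fun ω => ω.2.2 t)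
      (fun ω => fun j : {j : Fin N // (j : ℕ) < (t : ℕ)} => ω.2.2 j.1)

/-- `Σ_{t=1}^N I(X_{t-v}^t, S_{t-v-1}; Y_t | Y^{t-1})` under the joint law
of the source (windows truncated for small `t`; the singleton state window
`S_{t-v-1}` is encoded by the condition `j + v = t - 1` in 0-based time and
is empty for `t ≤ v`). -/
def objWin {N u : ℕ} (v : ℕ) (ch : NCFSC X S Y) (src : Source X S Y N u) : ℝ :=
  ∑ t : Fin N,
    condMI (jointP ch src)
      (fun ω : Traj X S Y N =>
        ((fun j : {j : Fin N // (t : ℕ) ≤ (j : ℕ) + v ∧ (j : ℕ) ≤ (t : ℕ)} => ω.1 j.1),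
          fun j : {j : Fin (N + 1) // (j : ℕ) + v = (t : ℕ)} => ω.2.1 j.1))
      (fun ω => ω.2.2 t)
      (fun ω => fun j : {j : Fin N // (j : ℕ) < (t : ℕ)} => ω.2.2 j.1)

/-- Directed information `I(X^N → Y^N) = Σ_{t=1}^N I(X^t; Y_t | Y^{t-1})`. -/
def directedInfo {N u : ℕ} (ch : NCFSC X S Y) (src : Source X S Y N u) : ℝ :=
  ∑ t : Fin N,
    condMI (jointP ch src)
      (fun ω : Traj X S Y N => fun j : {j : Fin N // (j : ℕ) ≤ (t : ℕ)} => ω.1 j.1)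
      (fun ω => ω.2.2 t)
      (fun ω => fun j : {j : Fin N // (j : ℕ) < (t : ℕ)} => ω.2.2 j.1)

/-- The a posteriori vectors `α_{t-1}(y^{t-u-1})` and `α_{t-1}(ỹ^{t-u-1})`
(at the 1-based time `(t:ℕ)+1`) induced by the two output histories `yh`
and `yh'` coincide: for all window values `(x_{t-v}^{t-1}, s_{t-v-1}^{t-u-1})`
the two a posteriori probabilities agree. -/
def alphaWinEq {N u : ℕ} (v : ℕ) (ch : NCFSC X S Y) (src : Source X S Y N u)
    (t : Fin N) (yh yh' : Fin N → Y) : Prop :=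
  ∀ (xf : Fin N → X) (sf : Fin (N + 1) → S),
    condPr (jointP ch src)
        {ω : Traj X S Y N |
          (∀ j : Fin N, (t : ℕ) ≤ (j : ℕ) + v ∧ (j : ℕ) < (t : ℕ) → ω.1 j = xf j) ∧
            ∀ j : Fin (N + 1), (t : ℕ) ≤ (j : ℕ) + v ∧ (j : ℕ) + u ≤ (t : ℕ) → ω.2.1 j = sf j}
        {ω : Traj X S Y N | ∀ j : Fin N, (j : ℕ) + u + 1 ≤ (t : ℕ) → ω.2.2 j = yh j} =
      condPr (jointP ch src)
        {ω : Traj X S Y N |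
          (∀ j : Fin N, (t : ℕ) ≤ (j : ℕ) + v ∧ (j : ℕ) < (t : ℕ) → ω.1 j = xf j) ∧
            ∀ j : Fin (N + 1), (t : ℕ) ≤ (j : ℕ) + v ∧ (j : ℕ) + u ≤ (t : ℕ) → ω.2.1 j = sf j}
        {ω : Traj X S Y N | ∀ j : Fin N, (j : ℕ) + u + 1 ≤ (t : ℕ) → ω.2.2 j = yh' j}

/-- The set `𝒫'_v(u,u)`: the policy at each time gives the same value on
any two positive-probability output histories inducing the same a
posteriori vector. -/
def AlphaPolicy {N u : ℕ} (v : ℕ) (ch : NCFSC X S Y) (src : Source X S Y N u) : Prop :=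
  ∀ (t : Fin N) (yh yh' : Fin N → Y),
    0 < prE (jointP ch src)
        {ω : Traj X S Y N | ∀ j : Fin N, (j : ℕ) + u + 1 ≤ (t : ℕ) → ω.2.2 j = yh j} →
    0 < prE (jointP ch src)
        {ω : Traj X S Y N | ∀ j : Fin N, (j : ℕ) + u + 1 ≤ (t : ℕ) → ω.2.2 j = yh' j} →
    alphaWinEq v ch src t yh yh' →
    ∀ (xf : Fin N → X) (sf : Fin (N + 1) → S) (a : X),
      src.pol t xf sf yh a = src.pol t xf sf yh' a

section Aux14

open Classical in
lemma prE_eq_sum_ite' {Ω : Type} [Fintype Ω] (p : Ω → ℝ) (E : Set Ω) :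
    prE p E = ∑ ω, if ω ∈ E then p ω else 0 := by
  unfold prE
  refine Finset.sum_congr rfl fun ω _ => ?_
  rw [Set.indicator_apply]

open Classical in
lemma prE_condPMF' {Ω : Type} [Fintype Ω] (p : Ω → ℝ) (F A : Set Ω) :
    prE (condPMF p F) A = prE p (A ∩ F) / prE p F := by
  rw [prE_eq_sum_ite' (condPMF p F) A, prE_eq_sum_ite' p (A ∩ F), Finset.sum_div]
  unfold condPMF
  refine Finset.sum_congr rfl fun ω _ => ?_
  by_cases hA : ω ∈ A <;> by_cases hF : ω ∈ F <;>
    simp [hA, hF, Set.indicator_apply, Set.mem_inter_iff]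

open Classical in
lemma prE_split' {Ω β : Type} [Fintype Ω] [Fintype β] (p : Ω → ℝ) (P : Ω → Prop) (f : Ω → β) :
    prE p {ω | P ω} = ∑ b, prE p {ω | P ω ∧ f ω = b} := by
  simp only [prE_eq_sum_ite']
  rw [Finset.sum_comm]
  refine Finset.sum_congr rfl fun ω _ => ?_
  by_cases h : P ω
  · simp [Set.mem_setOf_eq, h, Finset.sum_ite_eq]
  · simp [h, Set.mem_setOf_eq]

lemma condMI_eq_of_triple {Ω A B C : Type} [Fintype Ω] [Fintype A] [Fintype B] [Fintype C]
    (q q' : Ω → ℝ) (fA : Ω → A) (fB : Ω → B) (fC : Ω → C)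
    (h : ∀ a b c, prE q {ω | fA ω = a ∧ fB ω = b ∧ fC ω = c}
      = prE q' {ω | fA ω = a ∧ fB ω = b ∧ fC ω = c}) :
    condMI q fA fB fC = condMI q' fA fB fC := by
  have hprE : ∀ (r : Ω → ℝ) (P P' : Set Ω), P = P' → prE r P = prE r P' := by
    rintro r P P' rfl; rfl
  have hC : ∀ c, prE q {ω | fC ω = c} = prE q' {ω | fC ω = c} := by
    intro c
    rw [prE_split' q (fun ω => fC ω = c) (fun ω => (fA ω, fB ω)),
        prE_split' q' (fun ω => fC ω = c) (fun ω => (fA ω, fB ω))]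
    refine Finset.sum_congr rfl fun ab _ => ?_
    rw [hprE q _ {ω | fA ω = ab.1 ∧ fB ω = ab.2 ∧ fC ω = c} (by ext ω; simp [Prod.ext_iff]; tauto),
        hprE q' _ {ω | fA ω = ab.1 ∧ fB ω = ab.2 ∧ fC ω = c} (by ext ω; simp [Prod.ext_iff]; tauto)]
    exact h _ _ _
  have hAC : ∀ a c, prE q ({ω | fA ω = a} ∩ {ω | fC ω = c})
      = prE q' ({ω | fA ω = a} ∩ {ω | fC ω = c}) := by
    intro a c
    rw [hprE q _ {ω | fA ω = a ∧ fC ω = c} (by ext ω; simp [Set.mem_inter_iff]),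
        hprE q' _ {ω | fA ω = a ∧ fC ω = c} (by ext ω; simp [Set.mem_inter_iff]),
        prE_split' q (fun ω => fA ω = a ∧ fC ω = c) fB,
        prE_split' q' (fun ω => fA ω = a ∧ fC ω = c) fB]
    refine Finset.sum_congr rfl fun b _ => ?_
    rw [hprE q _ {ω | fA ω = a ∧ fB ω = b ∧ fC ω = c} (by ext ω; simp; tauto),
        hprE q' _ {ω | fA ω = a ∧ fB ω = b ∧ fC ω = c} (by ext ω; simp; tauto)]
    exact h _ _ _
  have hBC : ∀ b c, prE q ({ω | fB ω = b} ∩ {ω | fC ω = c})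
      = prE q' ({ω | fB ω = b} ∩ {ω | fC ω = c}) := by
    intro b c
    rw [hprE q _ {ω | fB ω = b ∧ fC ω = c} (by ext ω; simp [Set.mem_inter_iff]),
        hprE q' _ {ω | fB ω = b ∧ fC ω = c} (by ext ω; simp [Set.mem_inter_iff]),
        prE_split' q (fun ω => fB ω = b ∧ fC ω = c) fA,
        prE_split' q' (fun ω => fB ω = b ∧ fC ω = c) fA]
    refine Finset.sum_congr rfl fun a _ => ?_
    rw [hprE q _ {ω | fA ω = a ∧ fB ω = b ∧ fC ω = c} (by ext ω; simp; tauto),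
        hprE q' _ {ω | fA ω = a ∧ fB ω = b ∧ fC ω = c} (by ext ω; simp; tauto)]
    exact h _ _ _
  have hABC : ∀ a b c, prE q ({ω | fA ω = a ∧ fB ω = b} ∩ {ω | fC ω = c})
      = prE q' ({ω | fA ω = a ∧ fB ω = b} ∩ {ω | fC ω = c}) := by
    intro a b c
    rw [hprE q _ {ω | fA ω = a ∧ fB ω = b ∧ fC ω = c} (by ext ω; simp [Set.mem_inter_iff]; tauto),
        hprE q' _ {ω | fA ω = a ∧ fB ω = b ∧ fC ω = c} (by ext ω; simp [Set.mem_inter_iff]; tauto)]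
    exact h _ _ _
  unfold condMI condPr
  refine Finset.sum_congr rfl fun a _ => Finset.sum_congr rfl fun b _ =>
    Finset.sum_congr rfl fun c _ => ?_
  rw [h a b c, hABC a b c, hAC a c, hBC b c, hC c]

end Aux14
section Aux14b

/-- Past-coordinate part of a trajectory, relative to window parameters. -/
abbrev TrajP (X S Y : Type) (N u v T : ℕ) : Type :=
  ({j : Fin N // (j : ℕ) + v + 1 < T} → X) ×
    ({j : Fin (N + 1) // (j : ℕ) + v + 1 < T} → S) ×
    ({j : Fin N // (j : ℕ) + u + 1 < T} → Y)

/-- Non-past (window and future) part of a trajectory. -/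
abbrev TrajR (X S Y : Type) (N u v T : ℕ) : Type :=
  ({j : Fin N // ¬ ((j : ℕ) + v + 1 < T)} → X) ×
    ({j : Fin (N + 1) // ¬ ((j : ℕ) + v + 1 < T)} → S) ×
    ({j : Fin N // ¬ ((j : ℕ) + u + 1 < T)} → Y)

/-- Merge a past part and a rest part into a trajectory. -/
def mrgT {X S Y : Type} {N u v T : ℕ} (pp : TrajP X S Y N u v T)
    (r : TrajR X S Y N u v T) : Traj X S Y N :=
  (fun j => if h : (j : ℕ) + v + 1 < T then pp.1 ⟨j, h⟩ else r.1 ⟨j, h⟩,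
   fun j => if h : (j : ℕ) + v + 1 < T then pp.2.1 ⟨j, h⟩ else r.2.1 ⟨j, h⟩,
   fun j => if h : (j : ℕ) + u + 1 < T then pp.2.2 ⟨j, h⟩ else r.2.2 ⟨j, h⟩)

lemma mrgT_bijective {X S Y : Type} {N u v T : ℕ} :
    Function.Bijective (fun pr : TrajP X S Y N u v T × TrajR X S Y N u v T =>
      mrgT pr.1 pr.2) := by
  refine Function.bijective_iff_has_inverse.mpr
    ⟨fun ω => ⟨(fun j => ω.1 j.1, fun j => ω.2.1 j.1, fun j => ω.2.2 j.1),
      (fun j => ω.1 j.1, fun j => ω.2.1 j.1, fun j => ω.2.2 j.1)⟩, ?_, ?_⟩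
  · rintro ⟨⟨px, ps, py⟩, ⟨rx, rs, ry⟩⟩
    simp only [mrgT]
    refine Prod.ext (Prod.ext ?_ (Prod.ext ?_ ?_)) (Prod.ext ?_ (Prod.ext ?_ ?_)) <;>
      · funext j
        first
          | exact dif_pos j.2
          | exact dif_neg j.2
  · intro ω
    refine Prod.ext ?_ (Prod.ext ?_ ?_) <;>
      · funext j
        simp only [mrgT]
        split <;> rfl

lemma sum_mrgT {X S Y : Type} [Fintype X] [Fintype S] [Fintype Y] {N u : ℕ} (v T : ℕ)
    (f : Traj X S Y N → ℝ) :
    ∑ ω, f ω = ∑ pp : TrajP X S Y N u v T, ∑ r : TrajR X S Y N u v T, f (mrgT pp r) := by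
  have h1 : ∑ pr : TrajP X S Y N u v T × TrajR X S Y N u v T, f (mrgT pr.1 pr.2) = ∑ ω, f ω :=
    Fintype.sum_bijective _ mrgT_bijective _ f fun pr => rfl
  rw [← h1, Fintype.sum_prod_type]

/-- Output history spliced with the fixed past `yh`. -/
def yhatF {Y : Type} {N : ℕ} (u T : ℕ) (yh y : Fin N → Y) : Fin N → Y :=
  fun j => if (j : ℕ) + u + 1 < T then yh j else y j

/-- Past factor of the joint pmf. -/
def Gfun {X S Y : Type} [Fintype X] [Fintype S] [Fintype Y] {N u : ℕ}
    (ch : NCFSC X S Y) (src : Source X S Y N u) (T : ℕ) (yh : Fin N → Y)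
    (ω : Traj X S Y N) : ℝ :=
  ch.init (ω.2.1 0) *
    ∏ i : Fin N,
      (if (i : ℕ) + 1 < T then src.pol i ω.1 ω.2.1 (yhatF u T yh ω.2.2) (ω.1 i) else 1) *
      (if (i : ℕ) + u + 1 < T then
        ch.W (yh i) (ω.2.1 i.succ) (ω.1 i) (ω.2.1 i.castSucc) else 1)

/-- Future factor of the joint pmf. -/
def Hfun {X S Y : Type} [Fintype X] [Fintype S] [Fintype Y] {N u : ℕ}
    (ch : NCFSC X S Y) (src : Source X S Y N u) (T : ℕ) (yh : Fin N → Y)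
    (ω : Traj X S Y N) : ℝ :=
  ∏ i : Fin N,
    (if T ≤ (i : ℕ) + 1 then src.pol i ω.1 ω.2.1 (yhatF u T yh ω.2.2) (ω.1 i) else 1) *
    (if (i : ℕ) + u + 1 < T then 1 else
      ch.W (ω.2.2 i) (ω.2.1 i.succ) (ω.1 i) (ω.2.1 i.castSucc))

lemma NCFSC.W_nonneg' {X S Y : Type} [Fintype S] [Fintype Y] (ch : NCFSC X S Y)
    (y : Y) (s' : S) (x : X) (s : S) : 0 ≤ ch.W y s' x s :=
  mul_nonneg (ch.P_nonneg y x s) (ch.Q_nonneg s' s)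

lemma Hfun_nonneg {X S Y : Type} [Fintype X] [Fintype S] [Fintype Y] {N u : ℕ}
    (ch : NCFSC X S Y) (src : Source X S Y N u) (T : ℕ) (yh : Fin N → Y)
    (ω : Traj X S Y N) : 0 ≤ Hfun ch src T yh ω := by
  refine Finset.prod_nonneg fun i _ => mul_nonneg ?_ ?_
  · split
    · exact src.nonneg _ _ _ _ _
    · exact zero_le_one
  · split
    · exact zero_le_one
    · exact ch.W_nonneg' _ _ _ _

lemma jointP_factor {X S Y : Type} [Fintype X] [Fintype S] [Fintype Y] {N u : ℕ}
    (ch : NCFSC X S Y) (src : Source X S Y N u) (T : ℕ) (yh : Fin N → Y)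
    (ω : Traj X S Y N)
    (hE : ∀ j : Fin N, (j : ℕ) + u + 1 < T → ω.2.2 j = yh j) :
    jointP ch src ω = Gfun ch src T yh ω * Hfun ch src T yh ω := by
  have hy : yhatF u T yh ω.2.2 = ω.2.2 := by
    funext j
    unfold yhatF
    split
    · exact (hE j ‹_›).symm
    · rfl
  unfold jointP Gfun Hfun
  rw [hy, mul_assoc, ← Finset.prod_mul_distrib]
  congr 1
  refine Finset.prod_congr rfl fun i _ => ?_
  by_cases h1 : (i : ℕ) + 1 < T <;> by_cases h2 : (i : ℕ) + u + 1 < T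
  · rw [if_pos h1, if_pos h2, if_neg (by omega), if_pos h2, hE i h2]; ring
  · rw [if_pos h1, if_neg h2, if_neg (by omega), if_neg h2]; ring
  · exact absurd (by omega : (i : ℕ) + 1 < T) h1
  · rw [if_neg h1, if_neg h2, if_pos (by omega), if_neg h2]; ring

lemma Hfun_congr {X S Y : Type} [Fintype X] [Fintype S] [Fintype Y] {N u : ℕ}
    (ch : NCFSC X S Y) (src : Source X S Y N u) {v : ℕ} (huv : u ≤ v)
    (hM : IsMarkov v src) (T : ℕ) (yh : Fin N → Y) (ω ω' : Traj X S Y N)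
    (hx : ∀ j : Fin N, T ≤ (j : ℕ) + v + 1 → ω.1 j = ω'.1 j)
    (hs : ∀ j : Fin (N + 1), T ≤ (j : ℕ) + v + 1 → ω.2.1 j = ω'.2.1 j)
    (hy : ∀ j : Fin N, T ≤ (j : ℕ) + u + 1 → ω.2.2 j = ω'.2.2 j) :
    Hfun ch src T yh ω = Hfun ch src T yh ω' := by
  unfold Hfun
  refine Finset.prod_congr rfl fun i _ => ?_
  congr 1
  · by_cases hi : T ≤ (i : ℕ) + 1
    · rw [if_pos hi, if_pos hi]
      have hpol := hM i ω.1 ω'.1 ω.2.1 ω'.2.1 (yhatF u T yh ω.2.2) (yhatF u T yh ω'.2.2)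
        (fun j hj => hx j (by omega))
        (fun j hj => hs j (by omega))
        (fun j hj => by
          unfold yhatF
          split
          · rfl
          · exact hy j (by omega))
      rw [hpol, hx i (by omega)]
    · rw [if_neg hi, if_neg hi]
  · by_cases hc : (i : ℕ) + u + 1 < T
    · rw [if_pos hc, if_pos hc]
    · rw [if_neg hc, if_neg hc,
        hy i (by omega), hx i (by omega),
        hs i.succ (by simp only [Fin.val_succ]; omega),
        hs i.castSucc (by simp only [Fin.coe_castSucc]; omega)]

lemma Gfun_congr {X S Y : Type} [Fintype X] [Fintype S] [Fintype Y] {N u : ℕ}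
    (ch : NCFSC X S Y) (src : Source X S Y N u) (T : ℕ) (hT1 : u + 1 ≤ T)
    (yh : Fin N → Y) (ω ω' : Traj X S Y N)
    (hx : ∀ j : Fin N, (j : ℕ) + 1 < T → ω.1 j = ω'.1 j)
    (hs : ∀ j : Fin (N + 1), (j : ℕ) + u + 1 ≤ T → ω.2.1 j = ω'.2.1 j) :
    Gfun ch src T yh ω = Gfun ch src T yh ω' := by
  unfold Gfun
  rw [hs 0 (by simp only [Fin.val_zero]; omega)]
  congr 1
  refine Finset.prod_congr rfl fun i _ => ?_
  congr 1
  · by_cases hi : (i : ℕ) + 1 < T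
    · rw [if_pos hi, if_pos hi]
      have hpol := src.causal i ω.1 ω'.1 ω.2.1 ω'.2.1 (yhatF u T yh ω.2.2) (yhatF u T yh ω'.2.2)
        (fun j hj => hx j (by omega))
        (fun j hj => hs j (by omega))
        (fun j hj => by
          unfold yhatF
          rw [if_pos (by omega), if_pos (by omega)])
      rw [hpol, hx i hi]
    · rw [if_neg hi, if_neg hi]
  · by_cases hc : (i : ℕ) + u + 1 < T
    · rw [if_pos hc, if_pos hc,
        hx i (by omega),
        hs i.succ (by simp only [Fin.val_succ]; omega),
        hs i.castSucc (by simp only [Fin.coe_castSucc]; omega)]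
    · rw [if_neg hc, if_neg hc]

end Aux14b
section Aux14d

lemma mrgT_x {X S Y : Type} {N u v T : ℕ} (pp : TrajP X S Y N u v T)
    (r : TrajR X S Y N u v T) (j : Fin N) :
    (mrgT pp r).1 j = if h : (j : ℕ) + v + 1 < T then pp.1 ⟨j, h⟩ else r.1 ⟨j, h⟩ := rfl

lemma mrgT_s {X S Y : Type} {N u v T : ℕ} (pp : TrajP X S Y N u v T)
    (r : TrajR X S Y N u v T) (j : Fin (N + 1)) :
    (mrgT pp r).2.1 j = if h : (j : ℕ) + v + 1 < T then pp.2.1 ⟨j, h⟩ else r.2.1 ⟨j, h⟩ := rfl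

lemma mrgT_y {X S Y : Type} {N u v T : ℕ} (pp : TrajP X S Y N u v T)
    (r : TrajR X S Y N u v T) (j : Fin N) :
    (mrgT pp r).2.2 j = if h : (j : ℕ) + u + 1 < T then pp.2.2 ⟨j, h⟩ else r.2.2 ⟨j, h⟩ := rfl

lemma mrgT_x_congr {X S Y : Type} {N u v T : ℕ} (pp pp' : TrajP X S Y N u v T)
    (r : TrajR X S Y N u v T) (j : Fin N) (h : ¬ ((j : ℕ) + v + 1 < T)) :
    (mrgT pp r).1 j = (mrgT pp' r).1 j := by
  rw [mrgT_x pp r j, mrgT_x pp' r j, dif_neg h, dif_neg h]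

lemma mrgT_s_congr {X S Y : Type} {N u v T : ℕ} (pp pp' : TrajP X S Y N u v T)
    (r : TrajR X S Y N u v T) (j : Fin (N + 1)) (h : ¬ ((j : ℕ) + v + 1 < T)) :
    (mrgT pp r).2.1 j = (mrgT pp' r).2.1 j := by
  rw [mrgT_s pp r j, mrgT_s pp' r j, dif_neg h, dif_neg h]

lemma mrgT_y_congr {X S Y : Type} {N u v T : ℕ} (pp pp' : TrajP X S Y N u v T)
    (r : TrajR X S Y N u v T) (j : Fin N) (h : ¬ ((j : ℕ) + u + 1 < T)) :
    (mrgT pp r).2.2 j = (mrgT pp' r).2.2 j := by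
  rw [mrgT_y pp r j, mrgT_y pp' r j, dif_neg h, dif_neg h]

end Aux14d
section Aux14c

lemma Hfun_swap {X S Y : Type} [Fintype X] [Fintype S] [Fintype Y] {N u : ℕ}
    (ch : NCFSC X S Y) (src : Source X S Y N u) (T : ℕ) (yh yh' : Fin N → Y)
    (hpol : ∀ t : Fin N, T ≤ (t : ℕ) + 1 →
      ∀ (xf : Fin N → X) (sf : Fin (N + 1) → S) (yc yc' : Fin N → Y),
        (∀ j : Fin N, (j : ℕ) + u + 1 < T → yc j = yh j) →
        (∀ j : Fin N, (j : ℕ) + u + 1 < T → yc' j = yh' j) →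
        (∀ j : Fin N, T ≤ (j : ℕ) + u + 1 → yc j = yc' j) →
        ∀ a : X, src.pol t xf sf yc a = src.pol t xf sf yc' a)
    (ω : Traj X S Y N) :
    Hfun ch src T yh ω = Hfun ch src T yh' ω := by
  unfold Hfun
  refine Finset.prod_congr rfl fun i _ => ?_
  congr 1
  by_cases hi : T ≤ (i : ℕ) + 1
  · rw [if_pos hi, if_pos hi]
    exact hpol i hi ω.1 ω.2.1 (yhatF u T yh ω.2.2) (yhatF u T yh' ω.2.2)
      (fun j hj => if_pos hj)
      (fun j hj => if_pos hj)
      (fun j hj => by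
        unfold yhatF
        rw [if_neg (by omega), if_neg (by omega)]) (ω.1 i)
  · rw [if_neg hi, if_neg hi]

open Classical in
/-- Sum of the past factor over all past parts compatible with the history `yh`. -/
def GhatF {X S Y : Type} [Fintype X] [Fintype S] [Fintype Y] {N u : ℕ}
    (ch : NCFSC X S Y) (src : Source X S Y N u) (v T : ℕ) (yh : Fin N → Y)
    (r : TrajR X S Y N u v T) : ℝ :=
  ∑ pp : TrajP X S Y N u v T,
    if ∀ (j : Fin N) (hj : (j : ℕ) + u + 1 < T), pp.2.2 ⟨j, hj⟩ = yh j then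
      Gfun ch src T yh (mrgT pp r) else 0

lemma GhatF_congr {X S Y : Type} [Fintype X] [Fintype S] [Fintype Y] {N u : ℕ}
    (ch : NCFSC X S Y) (src : Source X S Y N u) (v T : ℕ) (hT1 : u + 1 ≤ T)
    (yh : Fin N → Y) (r r' : TrajR X S Y N u v T)
    (hxw : ∀ (j : Fin N) (h : ¬ ((j : ℕ) + v + 1 < T)), (j : ℕ) + 1 < T →
      r.1 ⟨j, h⟩ = r'.1 ⟨j, h⟩)
    (hsw : ∀ (j : Fin (N + 1)) (h : ¬ ((j : ℕ) + v + 1 < T)), (j : ℕ) + u + 1 ≤ T →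
      r.2.1 ⟨j, h⟩ = r'.2.1 ⟨j, h⟩) :
    GhatF ch src v T yh r = GhatF ch src v T yh r' := by
  unfold GhatF
  refine Finset.sum_congr rfl fun pp _ => ?_
  congr 1
  refine Gfun_congr ch src T hT1 yh (mrgT pp r) (mrgT pp r') (fun j hj => ?_) (fun j hj => ?_)
  · show (if h : (j : ℕ) + v + 1 < T then pp.1 ⟨j, h⟩ else r.1 ⟨j, h⟩)
      = (if h : (j : ℕ) + v + 1 < T then pp.1 ⟨j, h⟩ else r'.1 ⟨j, h⟩)
    by_cases h : (j : ℕ) + v + 1 < T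
    · rw [dif_pos h, dif_pos h]
    · rw [dif_neg h, dif_neg h]
      exact hxw j h hj
  · show (if h : (j : ℕ) + v + 1 < T then pp.2.1 ⟨j, h⟩ else r.2.1 ⟨j, h⟩)
      = (if h : (j : ℕ) + v + 1 < T then pp.2.1 ⟨j, h⟩ else r'.2.1 ⟨j, h⟩)
    by_cases h : (j : ℕ) + v + 1 < T
    · rw [dif_pos h, dif_pos h]
    · rw [dif_neg h, dif_neg h]
      exact hsw j h hj

end Aux14c
/-- **equation (beyondrate).** Under the hypotheses of the
key lemma for Theorem 3 (source in `𝒫_v(u,u)`, `0 ≤ u ≤ v`, two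
positive-probability output histories inducing the same a posteriori
vector `α_{T-1}`, and identical policies after time `T`),
`Σ_{t=T}^N I(X_{t-v}^t, S_{t-v-1}; Y_t | Y_{T-u}^{t-1}; Y^{T-u-1} = y^{T-u-1})
  = Σ_{t=T}^N I(X_{t-v}^t, S_{t-v-1}; Y_t | Y_{T-u}^{t-1}; Y^{T-u-1} = ỹ^{T-u-1})`,
where `I(A;B|C; E)` is the conditional mutual information computed under
the conditional distribution `Pr(· | E)`. -/
theorem statement14 {X S Y : Type} [Fintype X] [Fintype S] [Fintype Y] {N u : ℕ}
    (ch : NCFSC X S Y) (src : Source X S Y N u) (v : ℕ) (huv : u ≤ v)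
    (hM : IsMarkov v src)
    (T : ℕ) (hT1 : u + 1 ≤ T) (hTN : T ≤ N)
    (yh yh' : Fin N → Y)
    (hpos : 0 < prE (jointP ch src)
      {ω : Traj X S Y N | ∀ j : Fin N, (j : ℕ) + u + 1 < T → ω.2.2 j = yh j})
    (hpos' : 0 < prE (jointP ch src)
      {ω : Traj X S Y N | ∀ j : Fin N, (j : ℕ) + u + 1 < T → ω.2.2 j = yh' j})
    (halpha : alphaWinEq v ch src ⟨T - 1, by omega⟩ yh yh')
    (hpol : ∀ t : Fin N, T ≤ (t : ℕ) + 1 →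
      ∀ (xf : Fin N → X) (sf : Fin (N + 1) → S) (yc yc' : Fin N → Y),
        (∀ j : Fin N, (j : ℕ) + u + 1 < T → yc j = yh j) →
        (∀ j : Fin N, (j : ℕ) + u + 1 < T → yc' j = yh' j) →
        (∀ j : Fin N, T ≤ (j : ℕ) + u + 1 → yc j = yc' j) →
        ∀ a : X, src.pol t xf sf yc a = src.pol t xf sf yc' a) :
    (∑ t : Fin N, if T ≤ (t : ℕ) + 1 then
        condMI
          (condPMF (jointP ch src)
            {ω : Traj X S Y N | ∀ j : Fin N, (j : ℕ) + u + 1 < T → ω.2.2 j = yh j})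
          (fun ω : Traj X S Y N =>
            ((fun j : {j : Fin N // (t : ℕ) ≤ (j : ℕ) + v ∧ (j : ℕ) ≤ (t : ℕ)} => ω.1 j.1),
              fun j : {j : Fin (N + 1) // (j : ℕ) + v = (t : ℕ)} => ω.2.1 j.1))
          (fun ω => ω.2.2 t)
          (fun ω =>
            fun j : {j : Fin N // T ≤ (j : ℕ) + u + 1 ∧ (j : ℕ) < (t : ℕ)} => ω.2.2 j.1)
      else 0) =
      ∑ t : Fin N, if T ≤ (t : ℕ) + 1 then
        condMI
          (condPMF (jointP ch src)
            {ω : Traj X S Y N | ∀ j : Fin N, (j : ℕ) + u + 1 < T → ω.2.2 j = yh' j})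
          (fun ω : Traj X S Y N =>
            ((fun j : {j : Fin N // (t : ℕ) ≤ (j : ℕ) + v ∧ (j : ℕ) ≤ (t : ℕ)} => ω.1 j.1),
              fun j : {j : Fin (N + 1) // (j : ℕ) + v = (t : ℕ)} => ω.2.1 j.1))
          (fun ω => ω.2.2 t)
          (fun ω =>
            fun j : {j : Fin N // T ≤ (j : ℕ) + u + 1 ∧ (j : ℕ) < (t : ℕ)} => ω.2.2 j.1)
      else 0 := by
  classical
  -- the underlying sample space is nonempty
  have hne : Nonempty (Traj X S Y N) := by
    by_contra hc
    rw [not_nonempty_iff] at hc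
    have h0 : prE (jointP ch src)
        {ω : Traj X S Y N | ∀ j : Fin N, (j : ℕ) + u + 1 < T → ω.2.2 j = yh j} = 0 := by
      unfold prE
      simp
    rw [h0] at hpos
    exact lt_irrefl 0 hpos
  obtain ⟨ω₀⟩ := hne
  have pp0 : TrajP X S Y N u v T :=
    (fun j => ω₀.1 j.1, fun j => ω₀.2.1 j.1, fun j => ω₀.2.2 j.1)
  -- the master decomposition identity
  have key : ∀ (yH : Fin N → Y) (B : Set (Traj X S Y N)),
      (∀ (pp : TrajP X S Y N u v T) (r : TrajR X S Y N u v T),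
        mrgT pp r ∈ B ↔ mrgT pp0 r ∈ B) →
      prE (jointP ch src) (B ∩ {ω | ∀ j : Fin N, (j : ℕ) + u + 1 < T → ω.2.2 j = yH j})
        = ∑ r : TrajR X S Y N u v T,
            if mrgT pp0 r ∈ B then
              Hfun ch src T yH (mrgT pp0 r) * GhatF ch src v T yH r else 0 := by
    intro yH B hmeas
    rw [prE_eq_sum_ite', sum_mrgT (u := u) v T, Finset.sum_comm]
    refine Finset.sum_congr rfl fun r _ => ?_
    by_cases hB : mrgT pp0 r ∈ B
    · rw [if_pos hB]
      unfold GhatF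
      rw [Finset.mul_sum]
      refine Finset.sum_congr rfl fun pp _ => ?_
      by_cases hE : ∀ (j : Fin N) (hj : (j : ℕ) + u + 1 < T), pp.2.2 ⟨j, hj⟩ = yH j
      · have hmemE : ∀ j : Fin N, (j : ℕ) + u + 1 < T → (mrgT pp r).2.2 j = yH j := by
          intro j hj
          rw [mrgT_y pp r j, dif_pos hj]
          exact hE j hj
        rw [if_pos hE, if_pos (Set.mem_inter ((hmeas pp r).mpr hB)
            (show mrgT pp r ∈ {ω : Traj X S Y N |
              ∀ j : Fin N, (j : ℕ) + u + 1 < T → ω.2.2 j = yH j} from hmemE)),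
          jointP_factor ch src T yH (mrgT pp r) hmemE,
          Hfun_congr ch src huv hM T yH (mrgT pp r) (mrgT pp0 r)
            (fun j hj => mrgT_x_congr pp pp0 r j (by omega))
            (fun j hj => mrgT_s_congr pp pp0 r j (by omega))
            (fun j hj => mrgT_y_congr pp pp0 r j (by omega))]
        ring
      · rw [if_neg hE, if_neg, mul_zero]
        push_neg at hE
        obtain ⟨j, hj, hne2⟩ := hE
        intro hmem
        apply hne2
        have h2 := hmem.2 j hj
        rwa [mrgT_y pp r j, dif_pos hj] at h2
    · rw [if_neg hB]
      refine Finset.sum_eq_zero fun pp _ => ?_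
      rw [if_neg]
      intro hmem
      exact hB ((hmeas pp r).mp hmem.1)
  -- the key ratio identity coming from the equality of the a posteriori vectors
  have keyR : ∀ r : TrajR X S Y N u v T, Hfun ch src T yh (mrgT pp0 r) ≠ 0 →
      GhatF ch src v T yh r /
          prE (jointP ch src) {ω : Traj X S Y N | ∀ j : Fin N, (j : ℕ) + u + 1 < T → ω.2.2 j = yh j}
        = GhatF ch src v T yh' r /
          prE (jointP ch src) {ω : Traj X S Y N | ∀ j : Fin N, (j : ℕ) + u + 1 < T → ω.2.2 j = yh' j} := by
    intro r hH
    have hval : ∀ (hh : T - 1 < N), (((⟨T - 1, hh⟩ : Fin N) : ℕ)) = T - 1 := fun _ => rfl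
    have hA := halpha (mrgT pp0 r).1 (mrgT pp0 r).2.1
    simp only [hval] at hA
    have hEset1 : {ω : Traj X S Y N | ∀ j : Fin N, (j : ℕ) + u + 1 ≤ T - 1 → ω.2.2 j = yh j}
        = {ω : Traj X S Y N | ∀ j : Fin N, (j : ℕ) + u + 1 < T → ω.2.2 j = yh j} := by
      ext ω
      simp only [Set.mem_setOf_eq]
      exact ⟨fun h j hj => h j (by omega), fun h j hj => h j (by omega)⟩
    have hEset2 : {ω : Traj X S Y N | ∀ j : Fin N, (j : ℕ) + u + 1 ≤ T - 1 → ω.2.2 j = yh' j}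
        = {ω : Traj X S Y N | ∀ j : Fin N, (j : ℕ) + u + 1 < T → ω.2.2 j = yh' j} := by
      ext ω
      simp only [Set.mem_setOf_eq]
      exact ⟨fun h j hj => h j (by omega), fun h j hj => h j (by omega)⟩
    rw [hEset1, hEset2] at hA
    unfold condPr at hA
    set Win : Set (Traj X S Y N) :=
      {ω : Traj X S Y N |
        (∀ j : Fin N, T - 1 ≤ (j : ℕ) + v ∧ (j : ℕ) < T - 1 → ω.1 j = (mrgT pp0 r).1 j) ∧
          ∀ j : Fin (N + 1), T - 1 ≤ (j : ℕ) + v ∧ (j : ℕ) + u ≤ T - 1 →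
            ω.2.1 j = (mrgT pp0 r).2.1 j} with hWinDef
    have hWmeas : ∀ (pp : TrajP X S Y N u v T) (r' : TrajR X S Y N u v T),
        mrgT pp r' ∈ Win ↔ mrgT pp0 r' ∈ Win := by
      intro pp r'
      simp only [hWinDef, Set.mem_setOf_eq]
      have hx' : ∀ j : Fin N, T - 1 ≤ (j : ℕ) + v →
          (mrgT pp r').1 j = (mrgT pp0 r').1 j :=
        fun j hj => mrgT_x_congr pp pp0 r' j (by omega)
      have hs' : ∀ j : Fin (N + 1), T - 1 ≤ (j : ℕ) + v →
          (mrgT pp r').2.1 j = (mrgT pp0 r').2.1 j :=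
        fun j hj => mrgT_s_congr pp pp0 r' j (by omega)
      constructor
      · rintro ⟨h1, h2⟩
        exact ⟨fun j hj => (hx' j hj.1).symm.trans (h1 j hj),
          fun j hj => (hs' j hj.1).symm.trans (h2 j hj)⟩
      · rintro ⟨h1, h2⟩
        exact ⟨fun j hj => (hx' j hj.1).trans (h1 j hj),
          fun j hj => (hs' j hj.1).trans (h2 j hj)⟩
    have hGhatWin : ∀ (yH : Fin N → Y) (r' : TrajR X S Y N u v T), mrgT pp0 r' ∈ Win →
        GhatF ch src v T yH r' = GhatF ch src v T yH r := by
      intro yH r' hw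
      refine GhatF_congr ch src v T hT1 yH r' r (fun j h hj => ?_) (fun j h hj => ?_)
      · have h1 := hw.1 j ⟨by omega, by omega⟩
        rw [mrgT_x pp0 r' j, dif_neg h] at h1
        rw [h1, mrgT_x pp0 r j, dif_neg h]
      · have h1 := hw.2 j ⟨by omega, by omega⟩
        rw [mrgT_s pp0 r' j, dif_neg h] at h1
        rw [h1, mrgT_s pp0 r j, dif_neg h]
    have hsum1 : prE (jointP ch src)
          (Win ∩ {ω : Traj X S Y N | ∀ j : Fin N, (j : ℕ) + u + 1 < T → ω.2.2 j = yh j})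
        = GhatF ch src v T yh r * ∑ r' : TrajR X S Y N u v T,
            (if mrgT pp0 r' ∈ Win then Hfun ch src T yh (mrgT pp0 r') else 0) := by
      rw [key yh Win hWmeas, Finset.mul_sum]
      refine Finset.sum_congr rfl fun r' _ => ?_
      by_cases hw : mrgT pp0 r' ∈ Win
      · rw [if_pos hw, if_pos hw, hGhatWin yh r' hw]
        ring
      · rw [if_neg hw, if_neg hw, mul_zero]
    have hsum2 : prE (jointP ch src)
          (Win ∩ {ω : Traj X S Y N | ∀ j : Fin N, (j : ℕ) + u + 1 < T → ω.2.2 j = yh' j})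
        = GhatF ch src v T yh' r * ∑ r' : TrajR X S Y N u v T,
            (if mrgT pp0 r' ∈ Win then Hfun ch src T yh (mrgT pp0 r') else 0) := by
      rw [key yh' Win hWmeas, Finset.mul_sum]
      refine Finset.sum_congr rfl fun r' _ => ?_
      by_cases hw : mrgT pp0 r' ∈ Win
      · rw [if_pos hw, if_pos hw, hGhatWin yh' r' hw,
          ← Hfun_swap ch src T yh yh' hpol (mrgT pp0 r')]
        ring
      · rw [if_neg hw, if_neg hw, mul_zero]
    rw [hsum1, hsum2] at hA
    have hWself : mrgT pp0 r ∈ Win := ⟨fun j hj => rfl, fun j hj => rfl⟩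
    have hWHpos : 0 < ∑ r' : TrajR X S Y N u v T,
        (if mrgT pp0 r' ∈ Win then Hfun ch src T yh (mrgT pp0 r') else 0) := by
      have hnn : ∀ r' : TrajR X S Y N u v T,
          (0 : ℝ) ≤ if mrgT pp0 r' ∈ Win then Hfun ch src T yh (mrgT pp0 r') else 0 := by
        intro r'
        split
        · exact Hfun_nonneg ch src T yh _
        · exact le_rfl
      have hle : (if mrgT pp0 r ∈ Win then Hfun ch src T yh (mrgT pp0 r) else 0)
          ≤ ∑ r' : TrajR X S Y N u v T,
            (if mrgT pp0 r' ∈ Win then Hfun ch src T yh (mrgT pp0 r') else 0) :=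
        Finset.single_le_sum (fun r' _ => hnn r') (Finset.mem_univ r)
      rw [if_pos hWself] at hle
      exact lt_of_lt_of_le
        (lt_of_le_of_ne (Hfun_nonneg ch src T yh (mrgT pp0 r)) (Ne.symm hH)) hle
    rw [mul_div_right_comm, mul_div_right_comm] at hA
    exact mul_right_cancel₀ (ne_of_gt hWHpos) hA
  -- the main per-event identity
  have main : ∀ B : Set (Traj X S Y N),
      (∀ (pp : TrajP X S Y N u v T) (r : TrajR X S Y N u v T),
        mrgT pp r ∈ B ↔ mrgT pp0 r ∈ B) →
      prE (jointP ch src)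
          (B ∩ {ω : Traj X S Y N | ∀ j : Fin N, (j : ℕ) + u + 1 < T → ω.2.2 j = yh j}) /
        prE (jointP ch src)
          {ω : Traj X S Y N | ∀ j : Fin N, (j : ℕ) + u + 1 < T → ω.2.2 j = yh j}
      = prE (jointP ch src)
          (B ∩ {ω : Traj X S Y N | ∀ j : Fin N, (j : ℕ) + u + 1 < T → ω.2.2 j = yh' j}) /
        prE (jointP ch src)
          {ω : Traj X S Y N | ∀ j : Fin N, (j : ℕ) + u + 1 < T → ω.2.2 j = yh' j} := by
    intro B hmeas
    rw [key yh B hmeas, key yh' B hmeas, Finset.sum_div, Finset.sum_div]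
    refine Finset.sum_congr rfl fun r _ => ?_
    by_cases hB : mrgT pp0 r ∈ B
    · rw [if_pos hB, if_pos hB, mul_div_assoc, mul_div_assoc,
        ← Hfun_swap ch src T yh yh' hpol (mrgT pp0 r)]
      by_cases hH : Hfun ch src T yh (mrgT pp0 r) = 0
      · rw [hH, zero_mul, zero_mul]
      · rw [keyR r hH]
    · rw [if_neg hB, if_neg hB, zero_div, zero_div]
  -- conclude, term by term
  refine Finset.sum_congr rfl fun t _ => ?_
  by_cases ht : T ≤ (t : ℕ) + 1
  · rw [if_pos ht, if_pos ht]
    refine condMI_eq_of_triple _ _ _ _ _ fun a b c => ?_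
    rw [prE_condPMF', prE_condPMF']
    refine main _ fun pp r => ?_
    have e1 : (fun j : {j : Fin N // (t : ℕ) ≤ (j : ℕ) + v ∧ (j : ℕ) ≤ (t : ℕ)} =>
        (mrgT pp r).1 j.1) = (fun j => (mrgT pp0 r).1 j.1) :=
      funext fun j => mrgT_x_congr pp pp0 r j.1 (by have := j.2.1; omega)
    have e2 : (fun j : {j : Fin (N + 1) // (j : ℕ) + v = (t : ℕ)} =>
        (mrgT pp r).2.1 j.1) = (fun j => (mrgT pp0 r).2.1 j.1) :=
      funext fun j => mrgT_s_congr pp pp0 r j.1 (by have := j.2; omega)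
    have e3 : (mrgT pp r).2.2 t = (mrgT pp0 r).2.2 t :=
      mrgT_y_congr pp pp0 r t (by omega)
    have e4 : (fun j : {j : Fin N // T ≤ (j : ℕ) + u + 1 ∧ (j : ℕ) < (t : ℕ)} =>
        (mrgT pp r).2.2 j.1) = (fun j => (mrgT pp0 r).2.2 j.1) :=
      funext fun j => mrgT_y_congr pp pp0 r j.1 (by have := j.2.1; omega)
    simp only [Set.mem_setOf_eq, e1, e2, e3, e4]
  · rw [if_neg ht, if_neg ht]

end FSCPaper
end
end

section
/- Theorem 3 (finite-horizon supremum form): For a non-controllable FSC and 0 ≤ u ≤ v, the supremum of the finite-horizon information objective over v-th order conditional Markov sources is attained within the subclass of sources whose policies depend on the output history only through the a posteriori vector: sup_{P ∈ 𝒫_v(u,u)} Σ_{t=1}^N I^P(X_{t-v}^t, S_{t-v-1}; Y_t | Y^{t-1}) = sup_{P ∈ 𝒫'_v(u,u)} Σ_{t=1}^N I^P(X_{t-v}^t, S_{t-v-1}; Y_t | Y^{t-1}), where I^P denotes conditional mutual information under the joint law induced by the source P (windows truncated for small t). -/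
/-!
Common framework: finite-state channels (FSCs), non-controllable FSCs,
sources with delayed feedback (FB) and delayed state information (SI),
induced joint pmfs, conditional probabilities and conditional mutual
information, following Huang–Kavčić–Ma, "Upper Bounds on the Capacities of
Non-Controllable Finite-State Channels with/without Feedback".

Time convention: for a horizon `N`, the channel inputs are `X_1,…,X_N`
(coordinate `x i` of `x : Fin N → X` is `X_{i+1}`), the states are
`S_0,…,S_N` (coordinate `s j` of `s : Fin (N+1) → S` is `S_j`), and the
outputs are `Y_1,…,Y_N` (coordinate `y i` is `Y_{i+1}`).
-/

open Finset

noncomputable section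

namespace FSCPaper

variable {X S Y : Type} [Fintype X] [Fintype S] [Fintype Y]

/-!
At time `T = k + u` the encoder first sees the outputs `y^k`. For a `v`-th order Markov source
with `u ≤ v`, the law of the trajectory from the window of `α_T` on, given `y^k`, depends on
`y^k` only through `α_T` and through how the policies from time `T` on read `y^k`. Grafting
therefore lets the policies from time `T` on act on `rep y^k` instead of `y^k`, where `rep`
picks in each class of histories with the same `α_T` one with the largest tail objective per unit
of probability: the terms of the objective before `T` are unchanged and those from `T` on do not
decrease. The grafted policy at time `T` reads `y^k` only through `α_T`, and later grafts leave
the law before their own time alone, so grafting at `T = u, …, N - 1` in turn yields a source in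
`𝒫'_v(u,u)` with at least the same objective.
-/

section FiniteProbability

variable {Ω : Type} [Fintype Ω] {p : Ω → ℝ}

lemma prE_nonneg (hp : ∀ ω, 0 ≤ p ω) (E : Set Ω) : 0 ≤ prE p E :=
  Finset.sum_nonneg fun ω _ => Set.indicator_nonneg (fun a _ => hp a) ω

lemma prE_mono (hp : ∀ ω, 0 ≤ p ω) {E F : Set Ω} (h : E ⊆ F) : prE p E ≤ prE p F :=
  Finset.sum_le_sum fun ω _ => Set.indicator_le_indicator_of_subset h hp ω

lemma prE_eq_zero_of_subset (hp : ∀ ω, 0 ≤ p ω) {E F : Set Ω} (h : E ⊆ F)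
    (hF : prE p F = 0) : prE p E = 0 :=
  le_antisymm (hF ▸ prE_mono hp h) (prE_nonneg hp E)

lemma prE_eq_sum_mul_indicator (p : Ω → ℝ) (E : Set Ω) :
    prE p E = ∑ ω, p ω * E.indicator 1 ω :=
  Finset.sum_congr rfl fun ω _ => by
    rw [← Set.indicator_mul_right]; simp only [Pi.one_apply, mul_one]

open Classical in
lemma prE_eq_sum_filter (p : Ω → ℝ) (E : Set Ω) :
    prE p E = ∑ ω ∈ Finset.univ.filter (· ∈ E), p ω := by
  rw [Finset.sum_filter]
  exact Finset.sum_congr rfl fun ω _ => Set.indicator_apply E p ω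

lemma prE_eq_sum_prE_inter {κ : Type} [Fintype κ] (p : Ω → ℝ) (E : Set Ω) (h : Ω → κ) :
    prE p E = ∑ w : κ, prE p (E ∩ {ω | h ω = w}) := by
  classical
  simp only [prE_eq_sum_filter]
  rw [← Finset.sum_fiberwise _ h]
  refine Finset.sum_congr rfl fun w _ => Finset.sum_congr ?_ fun _ _ => rfl
  ext ω
  simp

lemma prE_mul_prE_eq_of_involutive {p q p' q' : Ω → ℝ} {A B A' B' : Set Ω}
    (φ : Ω × Ω → Ω × Ω) (hφ : Function.Involutive φ)
    (hmaps : ∀ z : Ω × Ω, z.1 ∈ A → z.2 ∈ B → (φ z).1 ∈ A' ∧ (φ z).2 ∈ B')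
    (hmaps' : ∀ z : Ω × Ω, z.1 ∈ A' → z.2 ∈ B' → (φ z).1 ∈ A ∧ (φ z).2 ∈ B)
    (hval : ∀ z : Ω × Ω, z.1 ∈ A → z.2 ∈ B → p z.1 * q z.2 = p' (φ z).1 * q' (φ z).2) :
    prE p A * prE q B = prE p' A' * prE q' B' := by
  classical
  simp only [prE_eq_sum_filter, Finset.sum_mul_sum, ← Finset.sum_product']
  refine Finset.sum_nbij' φ φ ?_ ?_ (fun z _ => hφ z) (fun z _ => hφ z) ?_ <;>
    simp only [Finset.mem_product, Finset.mem_filter, Finset.mem_univ, true_and]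
  · exact fun z hz => hmaps z hz.1 hz.2
  · exact fun z hz => hmaps' z hz.1 hz.2
  · exact fun z hz => hval z hz.1 hz.2

end FiniteProbability

section DeterminedBy

variable {α β : Type} {R R' : α → α → Prop}

def DeterminedBy (R : α → α → Prop) (f : α → β) : Prop :=
  ∀ a b, R a b → f a = f b

lemma DeterminedBy.mono (hRR' : ∀ a b, R' a b → R a b) {f : α → β} (hf : DeterminedBy R f) :
    DeterminedBy R' f :=
  fun a b h => hf a b (hRR' a b h)

lemma DeterminedBy.mul {f g : α → ℝ} (hf : DeterminedBy R f) (hg : DeterminedBy R g) :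
    DeterminedBy R (fun a => f a * g a) :=
  fun a b h => congrArg₂ (· * ·) (hf a b h) (hg a b h)

lemma DeterminedBy.inter {E F : Set α} (hE : DeterminedBy R (· ∈ E))
    (hF : DeterminedBy R (· ∈ F)) : DeterminedBy R (· ∈ E ∩ F) :=
  fun a b h => congrArg₂ And (hE a b h) (hF a b h)

lemma DeterminedBy.preimage {f : α → β} (hf : DeterminedBy R f) (c : β) :
    DeterminedBy R (· ∈ {a | f a = c}) :=
  fun a b h => congrArg (· = c) (hf a b h)

lemma DeterminedBy.indicator {E : Set α} (hE : DeterminedBy R (· ∈ E)) :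
    DeterminedBy R (E.indicator 1 : α → ℝ) :=
  fun a b h => by
    classical
    have hab : (a ∈ E) = (b ∈ E) := hE a b h
    simp only [Set.indicator_apply, hab, Pi.one_apply]

end DeterminedBy

section Marginalization

variable {N u : ℕ}

def PastEq (T : ℕ) (ω ω' : Traj X S Y N) : Prop :=
  (∀ j : Fin N, (j : ℕ) < T → ω.1 j = ω'.1 j) ∧
    (∀ j : Fin (N + 1), (j : ℕ) ≤ T → ω.2.1 j = ω'.2.1 j) ∧
    ∀ j : Fin N, (j : ℕ) < T → ω.2.2 j = ω'.2.2 j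

omit [Fintype X] [Fintype S] [Fintype Y] in
lemma PastEq.mono {T T' : ℕ} (h : T ≤ T') {ω ω' : Traj X S Y N} (hω : PastEq T' ω ω') :
    PastEq T ω ω' :=
  ⟨fun j hj => hω.1 j (by omega), fun j hj => hω.2.1 j (by omega),
    fun j hj => hω.2.2 j (by omega)⟩

lemma Source.pol_eq_of_pastEq (src : Source X S Y N u) (t : Fin N) {ω ω' : Traj X S Y N}
    (h : PastEq t ω ω') : src.pol t ω.1 ω.2.1 ω.2.2 = src.pol t ω'.1 ω'.2.1 ω'.2.2 :=
  src.causal t _ _ _ _ _ _ h.1 (fun j hj => h.2.1 j (by omega)) fun j hj => h.2.2 j (by omega)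

def polFactor (src : Source X S Y N u) (i : Fin N) (ω : Traj X S Y N) : ℝ :=
  src.pol i ω.1 ω.2.1 ω.2.2 (ω.1 i)

def chFactor (ch : NCFSC X S Y) (i : Fin N) (ω : Traj X S Y N) : ℝ :=
  ch.W (ω.2.2 i) (ω.2.1 i.succ) (ω.1 i) (ω.2.1 i.castSucc)

variable (ch : NCFSC X S Y)

lemma jointP_nonneg (src : Source X S Y N u) (ω : Traj X S Y N) : 0 ≤ jointP ch src ω :=
  mul_nonneg (ch.init_nonneg _) (Finset.prod_nonneg fun _ _ => mul_nonneg (src.nonneg _ _ _ _ _)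
    (mul_nonneg (ch.P_nonneg _ _ _) (ch.Q_nonneg _ _)))

def partialP (src : Source X S Y N u) (d : ℕ) (ω : Traj X S Y N) : ℝ :=
  ch.init (ω.2.1 0) *
    ∏ i ∈ Finset.univ.filter (fun i : Fin N => (i : ℕ) < d), polFactor src i ω * chFactor ch i ω

lemma partialP_eq_jointP (src : Source X S Y N u) : partialP ch src N = jointP ch src := by
  funext ω
  rw [partialP, Finset.filter_true_of_mem fun i _ => i.is_lt]
  rfl

lemma partialP_succ (src : Source X S Y N u) (i : Fin N) (ω : Traj X S Y N) :
    partialP ch src (i + 1) ω =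
      partialP ch src i ω * (polFactor src i ω * chFactor ch i ω) := by
  have hfilter : Finset.univ.filter (fun j : Fin N => (j : ℕ) < i + 1) =
      insert i (Finset.univ.filter (fun j : Fin N => (j : ℕ) < i)) := by
    ext j; simp [Fin.ext_iff]; omega
  rw [partialP, partialP, hfilter, Finset.prod_insert (by simp)]
  ring

lemma partialP_determinedBy (src : Source X S Y N u) (d : ℕ) :
    DeterminedBy (PastEq d) (partialP ch src d) := by
  intro ω ω' h
  unfold partialP
  rw [h.2.1 0 (Nat.zero_le d)]
  refine congrArg _ (Finset.prod_congr rfl fun i hi => ?_)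
  have hid : (i : ℕ) < d := (Finset.mem_filter.mp hi).2
  simp only [polFactor, chFactor]
  rw [src.pol_eq_of_pastEq i (h.mono hid.le), h.1 i hid, h.2.2 i hid,
    h.2.1 i.succ (by simp; omega), h.2.1 i.castSucc (by simp; omega)]

def setStep (i : Fin N) (ω : Traj X S Y N) (z : X × S × Y) : Traj X S Y N :=
  (Function.update ω.1 i z.1, Function.update ω.2.1 i.succ z.2.1, Function.update ω.2.2 i z.2.2)

omit [Fintype X] [Fintype S] [Fintype Y] in
lemma pastEq_setStep (i : Fin N) (ω : Traj X S Y N) (z : X × S × Y) :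
    PastEq i (setStep i ω z) ω := by
  refine ⟨fun j hj => ?_, fun j hj => ?_, fun j hj => ?_⟩ <;>
    refine Function.update_of_ne (fun h => ?_) _ _ <;> subst h <;> simp at hj

lemma sum_sum_setStep (i : Fin N) (F : Traj X S Y N → ℝ) :
    ∑ ω, ∑ z, F (setStep i ω z) = Fintype.card (X × S × Y) * ∑ ω, F ω := by
  have hinv : Function.Involutive
      fun q : Traj X S Y N × (X × S × Y) =>
        (setStep i q.1 q.2, (q.1.1 i, q.1.2.1 i.succ, q.1.2.2 i)) := by
    intro q
    simp [setStep]
  rw [← Fintype.sum_prod_type', Fintype.sum_bijective _ hinv.bijective _ (fun q => F q.1)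
    fun q => rfl, Fintype.sum_prod_type, Finset.mul_sum]
  simp [Finset.sum_const, mul_comm]

lemma sum_polFactor_mul_chFactor_setStep (src : Source X S Y N u) (i : Fin N) (ω : Traj X S Y N) :
    ∑ z, polFactor src i (setStep i ω z) * chFactor ch i (setStep i ω z) = 1 := by
  have hpol : ∀ z, src.pol i (setStep i ω z).1 (setStep i ω z).2.1 (setStep i ω z).2.2 =
      src.pol i ω.1 ω.2.1 ω.2.2 := fun z => src.pol_eq_of_pastEq i (pastEq_setStep i ω z)
  have hcast : (i.castSucc : Fin (N + 1)) ≠ i.succ := by simp [Fin.ext_iff]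
  simp only [polFactor, hpol]
  simp only [chFactor, NCFSC.W, setStep, Function.update_self, Function.update_of_ne hcast,
    Fintype.sum_prod_type]
  simp only [← Finset.mul_sum, ← Finset.sum_mul, ch.P_sum, one_mul, ch.Q_sum, mul_one,
    src.sum_one]

/-- Summing out step `i`: the factor `card (X × S × Y)` counts the values of `x_i, s_{i+1}, y_i`,
on which `g` does not depend. -/
lemma card_mul_sum_mul_step (src : Source X S Y N u) (i : Fin N) {g : Traj X S Y N → ℝ}
    (hg : DeterminedBy (PastEq i) g) :
    Fintype.card (X × S × Y) * ∑ ω, g ω * (polFactor src i ω * chFactor ch i ω) = ∑ ω, g ω := by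
  rw [← sum_sum_setStep]
  refine Finset.sum_congr rfl fun ω _ => ?_
  rw [Finset.sum_congr rfl fun z _ => by rw [hg _ _ (pastEq_setStep i ω z)], ← Finset.mul_sum,
    sum_polFactor_mul_chFactor_setStep, mul_one]

lemma sum_partialP_mul_eq_of_pol_eq {src₁ src₂ : Source X S Y N u} {T : ℕ}
    (hpol : ∀ i : Fin N, (i : ℕ) < T → src₁.pol i = src₂.pol i) {f : Traj X S Y N → ℝ}
    (hf : DeterminedBy (PastEq T) f) {d : ℕ} (hTd : T ≤ d) (hdN : d ≤ N) :
    ∑ ω, partialP ch src₁ d ω * f ω = ∑ ω, partialP ch src₂ d ω * f ω := by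
  induction d, hTd using Nat.le_induction with
  | base =>
    refine Finset.sum_congr rfl fun ω _ => ?_
    simp only [partialP, polFactor]
    congr 2
    refine Finset.prod_congr rfl fun i hi => ?_
    rw [hpol i (Finset.mem_filter.mp hi).2]
  | succ d hTd ih =>
    set i : Fin N := ⟨d, by omega⟩
    have hstep : ∀ src : Source X S Y N u, Fintype.card (X × S × Y) *
        ∑ ω, partialP ch src (d + 1) ω * f ω = ∑ ω, partialP ch src d ω * f ω := by
      intro src
      rw [← card_mul_sum_mul_step ch src i ((partialP_determinedBy ch src d).mul
        (hf.mono fun _ _ h => h.mono hTd))]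
      rw [show d + 1 = (i : ℕ) + 1 from rfl]
      exact congrArg _ (Finset.sum_congr rfl fun ω _ => by rw [partialP_succ]; ring)
    by_cases hK : (Fintype.card (X × S × Y) : ℝ) = 0
    · have hempty : Fintype.card (Traj X S Y N) = 0 := by
        have h := card_mul_sum_mul_step ch src₁ i (g := fun _ => 1) fun _ _ _ => rfl
        simp only [hK, zero_mul, Finset.sum_const, Finset.card_univ, nsmul_eq_mul,
          mul_one] at h
        exact_mod_cast h.symm
      have := Fintype.card_eq_zero_iff.mp hempty
      simp
    · exact mul_left_cancel₀ hK (by rw [hstep, hstep, ih (by omega)])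

lemma prE_jointP_eq_of_pol_eq {src₁ src₂ : Source X S Y N u} {T : ℕ} (hTN : T ≤ N)
    (hpol : ∀ i : Fin N, (i : ℕ) < T → src₁.pol i = src₂.pol i) {E : Set (Traj X S Y N)}
    (hE : DeterminedBy (PastEq T) (· ∈ E)) :
    prE (jointP ch src₁) E = prE (jointP ch src₂) E := by
  simp only [prE_eq_sum_mul_indicator, ← partialP_eq_jointP]
  exact sum_partialP_mul_eq_of_pol_eq ch hpol hE.indicator hTN le_rfl

end Marginalization

section Grafting

variable {N u v : ℕ}

abbrev History (Y : Type) (N k : ℕ) : Type := {j : Fin N // (j : ℕ) < k} → Y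

def outPrefix (k : ℕ) (ω : Traj X S Y N) : History Y N k :=
  fun j => ω.2.2 j.1

abbrev WindowValue (X S : Type) (N u v T : ℕ) : Type :=
  ({j : Fin N // T ≤ (j : ℕ) + v ∧ (j : ℕ) < T} → X) ×
    ({j : Fin (N + 1) // T ≤ (j : ℕ) + v ∧ (j : ℕ) + u ≤ T} → S)

/-- The arguments `(x_{T-v+1}^T, s_{T-v}^{T-u})` of the a posteriori vector `α_T`. -/
def window (u v T : ℕ) (ω : Traj X S Y N) : WindowValue X S N u v T :=
  (fun j => ω.1 j.1, fun j => ω.2.1 j.1)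

omit [Fintype X] [Fintype S] [Fintype Y] in
lemma window_eq_iff {T : ℕ} {ω ω' : Traj X S Y N} :
    window u v T ω = window u v T ω' ↔
      (∀ j : Fin N, T ≤ (j : ℕ) + v → (j : ℕ) < T → ω.1 j = ω'.1 j) ∧
        ∀ j : Fin (N + 1), T ≤ (j : ℕ) + v → (j : ℕ) + u ≤ T → ω.2.1 j = ω'.2.1 j := by
  simp only [window, Prod.ext_iff, funext_iff, Subtype.forall]
  exact ⟨fun h => ⟨fun j h₁ h₂ => h.1 j ⟨h₁, h₂⟩, fun j h₁ h₂ => h.2 j ⟨h₁, h₂⟩⟩,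
    fun h => ⟨fun j hj => h.1 j hj.1 hj.2, fun j hj => h.2 j hj.1 hj.2⟩⟩

def relabelPrefix (k : ℕ)
    (rep : History Y N k → History Y N k)
    (y : Fin N → Y) : Fin N → Y :=
  fun j => if h : (j : ℕ) < k then rep (fun i => y i.1) ⟨j, h⟩ else y j

omit [Fintype X] [Fintype S] [Fintype Y] in
lemma relabelPrefix_congr {k t : ℕ} (hkt : k + u ≤ t)
    (rep : History Y N k → History Y N k)
    {y y' : Fin N → Y} (hy : ∀ j : Fin N, (j : ℕ) + u + 1 ≤ t → y j = y' j)
    (j : Fin N) (hj : (j : ℕ) + u + 1 ≤ t) :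
    relabelPrefix k rep y j = relabelPrefix k rep y' j := by
  unfold relabelPrefix
  split_ifs with hjk
  · congr 2
    funext i
    exact hy i.1 (by omega)
  · exact hy j hj

/-- From time `k + u` on, when the first `k` outputs become visible to the encoder, the grafted
source acts as `src` would after these outputs had been relabelled by `rep`. -/
def graft (src : Source X S Y N u) (k : ℕ)
    (rep : History Y N k → History Y N k) :
    Source X S Y N u where
  pol t x s y := if k + u ≤ (t : ℕ) then src.pol t x s (relabelPrefix k rep y) else src.pol t x s y
  nonneg t x s y a := by split <;> exact src.nonneg _ _ _ _ _
  sum_one t x s y := by split <;> exact src.sum_one _ _ _ _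
  causal t x x' s s' y y' hx hs hy := by
    split
    · exact src.causal t x x' s s' _ _ hx hs (relabelPrefix_congr (by assumption) rep hy)
    · exact src.causal t x x' s s' y y' hx hs hy

lemma graft_pol_of_lt (src : Source X S Y N u) {k : ℕ} (rep : History Y N k → History Y N k)
    {i : Fin N} (hi : (i : ℕ) < k + u) :
    (graft src k rep).pol i = src.pol i := by
  funext x s y
  simp [graft, not_le.mpr hi]

lemma graft_pol_of_le (src : Source X S Y N u) {k : ℕ} (rep : History Y N k → History Y N k)
    {i : Fin N} (hi : k + u ≤ (i : ℕ))
    (x : Fin N → X) (s : Fin (N + 1) → S) (y : Fin N → Y) :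
    (graft src k rep).pol i x s y = src.pol i x s (relabelPrefix k rep y) := by
  simp [graft, hi]

lemma IsMarkov.graft {src : Source X S Y N u} (hM : IsMarkov v src) (k : ℕ)
    (rep : History Y N k → History Y N k) :
    IsMarkov v (graft src k rep) := by
  intro t x x' s s' y y' hx hs hy
  simp only [FSCPaper.graft]
  split
  · exact hM t x x' s s' _ _ hx hs (relabelPrefix_congr (by assumption) rep hy)
  · exact hM t x x' s s' y y' hx hs hy

/-- The trajectory with the past of `π` (before the window at time `k + u`, and the first `k`
outputs) and the rest of `β`. -/
def mergePast (u v k : ℕ) (π β : Traj X S Y N) : Traj X S Y N :=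
  (fun j => if (j : ℕ) + v < k + u then π.1 j else β.1 j,
   fun j => if (j : ℕ) + v < k + u then π.2.1 j else β.2.1 j,
   fun j => if (j : ℕ) < k then π.2.2 j else β.2.2 j)

section MergeCoordinates

omit [Fintype X] [Fintype S] [Fintype Y]

variable {k : ℕ} {π β : Traj X S Y N}

lemma mergePast_mergePast (π β : Traj X S Y N) :
    mergePast u v k (mergePast u v k π β) (mergePast u v k β π) = π := by
  unfold mergePast
  refine Prod.ext ?_ (Prod.ext ?_ ?_) <;> funext j <;> dsimp only <;> split <;> simp_all

lemma outPrefix_mergePast : outPrefix k (mergePast u v k π β) = outPrefix k π := by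
  funext j
  simp [outPrefix, mergePast, j.2]

lemma mergePast_x_eq_left (hw : window u v (k + u) π = window u v (k + u) β) {j : Fin N}
    (hj : (j : ℕ) < k + u) : (mergePast u v k π β).1 j = π.1 j := by
  dsimp only [mergePast]
  split
  · rfl
  · exact ((window_eq_iff.mp hw).1 j (by omega) hj).symm

lemma mergePast_x_eq_right {j : Fin N} (hj : k + u ≤ (j : ℕ) + v) :
    (mergePast u v k π β).1 j = β.1 j := by
  simp [mergePast, not_lt.mpr hj]

lemma mergePast_s_eq_left (hw : window u v (k + u) π = window u v (k + u) β) {j : Fin (N + 1)}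
    (hj : (j : ℕ) + u ≤ k + u) : (mergePast u v k π β).2.1 j = π.2.1 j := by
  dsimp only [mergePast]
  split
  · rfl
  · exact ((window_eq_iff.mp hw).2 j (by omega) hj).symm

lemma mergePast_s_eq_right {j : Fin (N + 1)} (hj : k + u ≤ (j : ℕ) + v) :
    (mergePast u v k π β).2.1 j = β.2.1 j := by
  simp [mergePast, not_lt.mpr hj]

lemma mergePast_y_eq_left {j : Fin N} (hj : (j : ℕ) < k) :
    (mergePast u v k π β).2.2 j = π.2.2 j := by
  simp [mergePast, hj]

lemma mergePast_y_eq_right {j : Fin N} (hj : k ≤ (j : ℕ)) :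
    (mergePast u v k π β).2.2 j = β.2.2 j := by
  simp [mergePast, not_lt.mpr hj]

end MergeCoordinates

end Grafting

section Swap

variable {N u v k : ℕ} {π β : Traj X S Y N}

omit [Fintype X] in
lemma chFactor_mergePast (ch : NCFSC X S Y) (huv : u ≤ v)
    (hw : window u v (k + u) π = window u v (k + u) β) (i : Fin N) :
    chFactor ch i (mergePast u v k π β) = chFactor ch i (if (i : ℕ) < k then π else β) := by
  unfold chFactor
  split_ifs with hik
  · rw [mergePast_y_eq_left hik, mergePast_x_eq_left hw (by omega),
      mergePast_s_eq_left hw (j := i.succ) (by simp; omega),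
      mergePast_s_eq_left hw (j := i.castSucc) (by simp; omega)]
  · rw [mergePast_y_eq_right (by omega), mergePast_x_eq_right (by omega),
      mergePast_s_eq_right (j := i.succ) (by simp; omega),
      mergePast_s_eq_right (j := i.castSucc) (by simp; omega)]

lemma polFactor_mergePast_of_lt (src : Source X S Y N u)
    (hw : window u v (k + u) π = window u v (k + u) β) {i : Fin N} (hi : (i : ℕ) < k + u) :
    polFactor src i (mergePast u v k π β) = polFactor src i π := by
  unfold polFactor
  rw [src.causal i _ π.1 _ π.2.1 _ π.2.2 (fun j hj => mergePast_x_eq_left hw (by omega))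
    (fun j hj => mergePast_s_eq_left hw (by omega)) (fun j hj => mergePast_y_eq_left (by omega)),
    mergePast_x_eq_left hw hi]

variable {src : Source X S Y N u}
  {rep : History Y N k → History Y N k}

lemma polFactor_mergePast_of_le (hM : IsMarkov v src)
    (hρ : outPrefix k π = rep (outPrefix k β)) {i : Fin N} (hi : k + u ≤ (i : ℕ)) :
    polFactor src i (mergePast u v k π β) = polFactor (graft src k rep) i β := by
  unfold polFactor
  rw [graft_pol_of_le src rep hi, mergePast_x_eq_right (by omega)]
  refine congrFun (hM i _ _ _ _ _ _ (fun j hj => mergePast_x_eq_right (by omega))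
    (fun j hj => mergePast_s_eq_right (by omega)) fun j _ => ?_) _
  by_cases hjk : (j : ℕ) < k
  · rw [mergePast_y_eq_left hjk, relabelPrefix, dif_pos hjk]
    exact congrFun hρ ⟨j, hjk⟩
  · rw [mergePast_y_eq_right (by omega), relabelPrefix, dif_neg hjk]

lemma polFactor_graft_mergePast_of_le (hM : IsMarkov v src)
    (hρ : rep (outPrefix k π) = outPrefix k β) {i : Fin N} (hi : k + u ≤ (i : ℕ)) :
    polFactor (graft src k rep) i (mergePast u v k π β) = polFactor src i β := by
  unfold polFactor
  rw [graft_pol_of_le src rep hi, mergePast_x_eq_right (by omega)]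
  refine congrFun (hM i _ _ _ _ _ _ (fun j hj => mergePast_x_eq_right (by omega))
    (fun j hj => mergePast_s_eq_right (by omega)) fun j _ => ?_) _
  by_cases hjk : (j : ℕ) < k
  · rw [relabelPrefix, dif_pos hjk]
    exact congrFun ((congrArg rep outPrefix_mergePast).trans hρ) ⟨j, hjk⟩
  · rw [relabelPrefix, dif_neg hjk, mergePast_y_eq_right (by omega)]

lemma jointP_eq_init_mul_prod_mul_prod (ch : NCFSC X S Y) (src : Source X S Y N u)
    (ω : Traj X S Y N) :
    jointP ch src ω =
      ch.init (ω.2.1 0) * ((∏ i, polFactor src i ω) * ∏ i, chFactor ch i ω) := by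
  rw [← Finset.prod_mul_distrib]
  rfl

/-- Exchanging the pasts of two trajectories with the same window at time `k + u` turns a
trajectory of the grafted source from a prefix `ρ` into one of `src` from `rep ρ`, and back:
from time `k + u` on the policies see the past only through the window and the relabelled
prefix, and the channel factors split at step `k`. -/
lemma jointP_graft_mul_jointP_eq (ch : NCFSC X S Y) (huv : u ≤ v) (hM : IsMarkov v src)
    {ω₁ ω₂ : Traj X S Y N} (hw : window u v (k + u) ω₁ = window u v (k + u) ω₂)
    (hρ : outPrefix k ω₂ = rep (outPrefix k ω₁)) :
    jointP ch (graft src k rep) ω₁ * jointP ch src ω₂ =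
      jointP ch src (mergePast u v k ω₂ ω₁) *
        jointP ch (graft src k rep) (mergePast u v k ω₁ ω₂) := by
  have hpol : ∀ i, polFactor (graft src k rep) i ω₁ * polFactor src i ω₂ =
      polFactor src i (mergePast u v k ω₂ ω₁) *
        polFactor (graft src k rep) i (mergePast u v k ω₁ ω₂) := by
    intro i
    rcases lt_or_ge (i : ℕ) (k + u) with hi | hi
    · rw [polFactor_mergePast_of_lt _ hw.symm hi, polFactor_mergePast_of_lt _ hw hi, mul_comm]
    · rw [polFactor_mergePast_of_le hM hρ hi, polFactor_graft_mergePast_of_le hM hρ.symm hi]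
  have hch : ∀ i, chFactor ch i ω₁ * chFactor ch i ω₂ =
      chFactor ch i (mergePast u v k ω₂ ω₁) * chFactor ch i (mergePast u v k ω₁ ω₂) := by
    intro i
    rw [chFactor_mergePast ch huv hw.symm, chFactor_mergePast ch huv hw]
    split_ifs <;> ring
  have hP := Finset.prod_congr rfl fun i (_ : i ∈ Finset.univ) => hpol i
  have hC := Finset.prod_congr rfl fun i (_ : i ∈ Finset.univ) => hch i
  simp only [Finset.prod_mul_distrib] at hP hC
  simp only [jointP_eq_init_mul_prod_mul_prod]
  rw [mergePast_s_eq_left hw.symm (j := 0) (by simp), mergePast_s_eq_left hw (j := 0) (by simp)]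
  linear_combination
    (ch.init (ω₁.2.1 0) * ch.init (ω₂.2.1 0) * (∏ i, chFactor ch i ω₁) *
      ∏ i, chFactor ch i ω₂) * hP +
    (ch.init (ω₁.2.1 0) * ch.init (ω₂.2.1 0) * (∏ i, polFactor src i (mergePast u v k ω₂ ω₁)) *
      ∏ i, polFactor (graft src k rep) i (mergePast u v k ω₁ ω₂)) * hC

end Swap

section TailTransfer

variable {N u v k : ℕ}

def TailEq (u v k : ℕ) (ω ω' : Traj X S Y N) : Prop :=
  (∀ j : Fin N, k + u ≤ (j : ℕ) + v → ω.1 j = ω'.1 j) ∧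
    (∀ j : Fin (N + 1), k + u ≤ (j : ℕ) + v → ω.2.1 j = ω'.2.1 j) ∧
    ∀ j : Fin N, k ≤ (j : ℕ) → ω.2.2 j = ω'.2.2 j

section Coordinates

omit [Fintype X] [Fintype S] [Fintype Y]

lemma tailEq_mergePast (π β : Traj X S Y N) : TailEq u v k (mergePast u v k π β) β :=
  ⟨fun _ hj => mergePast_x_eq_right hj, fun _ hj => mergePast_s_eq_right hj,
    fun _ hj => mergePast_y_eq_right hj⟩

lemma window_mergePast (π β : Traj X S Y N) :
    window u v (k + u) (mergePast u v k π β) = window u v (k + u) β :=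
  window_eq_iff.mpr ⟨fun _ hj _ => mergePast_x_eq_right hj, fun _ hj _ => mergePast_s_eq_right hj⟩

lemma outPrefix_determinedBy {T : ℕ} (hkT : k ≤ T) :
    DeterminedBy (PastEq T) (outPrefix (X := X) (S := S) (Y := Y) (N := N) k) :=
  fun _ _ h => funext fun j => h.2.2 j.1 (by have := j.2; omega)

lemma window_determinedBy (T : ℕ) :
    DeterminedBy (PastEq T) (window (X := X) (S := S) (Y := Y) (N := N) u v T) :=
  fun _ _ h => window_eq_iff.mpr
    ⟨fun j _ hj => h.1 j hj, fun j _ hj => h.2.1 j (by omega)⟩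

end Coordinates

variable (ch : NCFSC X S Y) {src : Source X S Y N u}
  (rep : History Y N k → History Y N k)

lemma prE_graft_eq (hN : k + u ≤ N) {E : Set (Traj X S Y N)}
    (hE : DeterminedBy (PastEq (k + u)) (· ∈ E)) :
    prE (jointP ch (graft src k rep)) E = prE (jointP ch src) E :=
  prE_jointP_eq_of_pol_eq ch hN (fun _ hi => graft_pol_of_lt src rep hi) hE

lemma prE_graft_mul_prE_eq (huv : u ≤ v) (hM : IsMarkov v src)
    (ρ : History Y N k) {F : Set (Traj X S Y N)}
    (hF : DeterminedBy (TailEq u v k) (· ∈ F)) (w : WindowValue X S N u v (k + u)) :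
    prE (jointP ch (graft src k rep))
        ({ω | outPrefix k ω = ρ} ∩ F ∩ {ω | window u v (k + u) ω = w}) *
        prE (jointP ch src) ({ω | outPrefix k ω = rep ρ} ∩ {ω | window u v (k + u) ω = w}) =
      prE (jointP ch src) ({ω | outPrefix k ω = rep ρ} ∩ F ∩ {ω | window u v (k + u) ω = w}) *
        prE (jointP ch (graft src k rep))
          ({ω | outPrefix k ω = ρ} ∩ {ω | window u v (k + u) ω = w}) := by
  have hmaps : ∀ (σ τ : History Y N k) (z : Traj X S Y N × Traj X S Y N),
      z.1 ∈ {ω | outPrefix k ω = σ} ∩ F ∩ {ω | window u v (k + u) ω = w} →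
      z.2 ∈ {ω | outPrefix k ω = τ} ∩ {ω | window u v (k + u) ω = w} →
      mergePast u v k z.2 z.1 ∈ {ω | outPrefix k ω = τ} ∩ F ∩ {ω | window u v (k + u) ω = w} ∧
        mergePast u v k z.1 z.2 ∈ {ω | outPrefix k ω = σ} ∩ {ω | window u v (k + u) ω = w} := by
    rintro σ τ ⟨ω₁, ω₂⟩ ⟨⟨hσ, hF₁⟩, hw₁⟩ ⟨hτ, hw₂⟩
    exact ⟨⟨⟨outPrefix_mergePast.trans hτ, (hF _ _ (tailEq_mergePast ω₂ ω₁)).mpr hF₁⟩,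
      (window_mergePast ω₂ ω₁).trans hw₁⟩,
      outPrefix_mergePast.trans hσ, (window_mergePast ω₁ ω₂).trans hw₂⟩
  refine prE_mul_prE_eq_of_involutive (fun z => (mergePast u v k z.2 z.1, mergePast u v k z.1 z.2))
    (fun z => Prod.ext (mergePast_mergePast z.1 z.2) (mergePast_mergePast z.2 z.1))
    (hmaps ρ (rep ρ)) (hmaps (rep ρ) ρ) ?_
  rintro ⟨ω₁, ω₂⟩ ⟨⟨hρ₁, -⟩, hw₁⟩ ⟨hρ₂, hw₂⟩
  exact jointP_graft_mul_jointP_eq ch huv hM (hw₁.trans hw₂.symm)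
    (hρ₂.trans (congrArg rep hρ₁).symm)

/-- The a posteriori vector `α_{k+u}` as a function of the first `k` outputs. -/
def posterior (p : Traj X S Y N → ℝ) (u v k : ℕ) (ρ : History Y N k) :
    WindowValue X S N u v (k + u) → ℝ :=
  fun w => condPr p {ω | window u v (k + u) ω = w} {ω | outPrefix k ω = ρ}

/-- Given the first `k` outputs `ρ`, the grafted source continues as `src` does after `rep ρ`,
provided `ρ` and `rep ρ` have the same posterior. -/
lemma prE_graft_inter_mul_eq (huv : u ≤ v) (hN : k + u ≤ N) (hM : IsMarkov v src)
    (ρ : History Y N k) (hpos : 0 < prE (jointP ch src) {ω | outPrefix k ω = ρ})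
    (hpos' : 0 < prE (jointP ch src) {ω | outPrefix k ω = rep ρ})
    (hα : posterior (jointP ch src) u v k ρ = posterior (jointP ch src) u v k (rep ρ))
    {F : Set (Traj X S Y N)} (hF : DeterminedBy (TailEq u v k) (· ∈ F)) :
    prE (jointP ch (graft src k rep)) ({ω | outPrefix k ω = ρ} ∩ F) *
        prE (jointP ch src) {ω | outPrefix k ω = rep ρ} =
      prE (jointP ch src) ({ω | outPrefix k ω = rep ρ} ∩ F) *
        prE (jointP ch src) {ω | outPrefix k ω = ρ} := by
  set p := jointP ch src
  set pG := jointP ch (graft src k rep)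
  rw [prE_eq_sum_prE_inter pG ({ω | outPrefix k ω = ρ} ∩ F) (window u v (k + u)),
    prE_eq_sum_prE_inter p ({ω | outPrefix k ω = rep ρ} ∩ F) (window u v (k + u)),
    Finset.sum_mul, Finset.sum_mul]
  refine Finset.sum_congr rfl fun w _ => ?_
  have hpast : prE pG ({ω | outPrefix k ω = ρ} ∩ {ω | window u v (k + u) ω = w}) =
      prE p ({ω | outPrefix k ω = ρ} ∩ {ω | window u v (k + u) ω = w}) :=
    prE_graft_eq ch rep hN (((outPrefix_determinedBy le_self_add).preimage ρ).inter
      ((window_determinedBy _).preimage w))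
  have hswap := prE_graft_mul_prE_eq ch rep huv hM ρ hF w
  rw [hpast] at hswap
  have hαw : prE p ({ω | outPrefix k ω = ρ} ∩ {ω | window u v (k + u) ω = w}) *
        prE p {ω | outPrefix k ω = rep ρ} =
      prE p ({ω | outPrefix k ω = rep ρ} ∩ {ω | window u v (k + u) ω = w}) *
        prE p {ω | outPrefix k ω = ρ} := by
    have h := congrFun hα w
    simp only [posterior, condPr] at h
    rw [div_eq_div_iff hpos.ne' hpos'.ne', Set.inter_comm {ω | window u v (k + u) ω = w},
      Set.inter_comm {ω | window u v (k + u) ω = w}] at h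
    exact h
  by_cases hb : prE p ({ω | outPrefix k ω = rep ρ} ∩ {ω | window u v (k + u) ω = w}) = 0
  · have hd : prE p ({ω | outPrefix k ω = ρ} ∩ {ω | window u v (k + u) ω = w}) = 0 := by
      rw [hb, zero_mul] at hαw
      exact (mul_eq_zero.mp hαw).resolve_right hpos'.ne'
    rw [prE_eq_zero_of_subset (jointP_nonneg ch _)
        (Set.inter_subset_inter_left _ Set.inter_subset_left) (hpast.trans hd),
      prE_eq_zero_of_subset (jointP_nonneg ch _)
        (Set.inter_subset_inter_left _ Set.inter_subset_left) hb,
      zero_mul, zero_mul]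
  · refine mul_right_cancel₀ hb ?_
    linear_combination prE p {ω | outPrefix k ω = rep ρ} * hswap +
      prE p ({ω | outPrefix k ω = rep ρ} ∩ F ∩ {ω | window u v (k + u) ω = w}) * hαw

end TailTransfer

section MutualInformation

variable {Ω : Type} [Fintype Ω]

def miTerm (p : Ω → ℝ) (A B C : Set Ω) : ℝ :=
  prE p (A ∩ (B ∩ C)) * Real.log (condPr p (A ∩ B) C / (condPr p A C * condPr p B C))

lemma condMI_eq_sum_miTerm {A B C : Type} [Fintype A] [Fintype B] [Fintype C] (p : Ω → ℝ)
    (fA : Ω → A) (fB : Ω → B) (fC : Ω → C) :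
    condMI p fA fB fC = ∑ a, ∑ b, ∑ c, miTerm p {ω | fA ω = a} {ω | fB ω = b} {ω | fC ω = c} :=
  rfl

lemma miTerm_inter_eq_mul {p q : Ω → ℝ} {r : ℝ} (hr : r ≠ 0) {P : Set Ω → Prop}
    (hinter : ∀ D D', P D → P D' → P (D ∩ D')) {A B C E E' : Set Ω} (hA : P A) (hB : P B)
    (hC : P C) (h : ∀ D, P D → prE p (E ∩ D) = r * prE q (E' ∩ D)) :
    miTerm p A B (E ∩ C) = r * miTerm q A B (E' ∩ C) := by
  have hcomm : ∀ F D : Set Ω, D ∩ (F ∩ C) = F ∩ (D ∩ C) := fun F D => Set.inter_left_comm _ _ _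
  have hcomm' : ∀ F : Set Ω, A ∩ (B ∩ (F ∩ C)) = F ∩ (A ∩ (B ∩ C)) := fun F => by
    rw [hcomm F B, Set.inter_left_comm]
  rw [miTerm, miTerm, hcomm' E, hcomm' E']
  simp only [condPr, hcomm E, hcomm E']
  rw [h _ (hinter _ _ hA (hinter _ _ hB hC)), h _ (hinter _ _ (hinter _ _ hA hB) hC),
    h _ (hinter _ _ hA hC), h _ (hinter _ _ hB hC), h _ hC, mul_div_mul_left _ _ hr,
    mul_div_mul_left _ _ hr, mul_div_mul_left _ _ hr, mul_assoc]

lemma miTerm_congr {p q : Ω → ℝ} {P : Set Ω → Prop} (hinter : ∀ D D', P D → P D' → P (D ∩ D'))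
    {A B C : Set Ω} (hA : P A) (hB : P B) (hC : P C) (h : ∀ D, P D → prE p D = prE q D) :
    miTerm p A B C = miTerm q A B C := by
  simp only [miTerm, condPr]
  rw [h _ (hinter _ _ hA (hinter _ _ hB hC)), h _ (hinter _ _ (hinter _ _ hA hB) hC),
    h _ (hinter _ _ hA hC), h _ (hinter _ _ hB hC), h _ hC]

lemma miTerm_eq_zero {p : Ω → ℝ} (hp : ∀ ω, 0 ≤ p ω) {A B C : Set Ω} (hC : prE p C = 0) :
    miTerm p A B C = 0 := by
  rw [miTerm, prE_eq_zero_of_subset hp (fun _ h => h.2.2) hC, zero_mul]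

end MutualInformation

section PrefixDecomposition

variable {N k t : ℕ}

def IsPrefix (ρ : History Y N k) (c : History Y N t) : Prop :=
  ∀ j : {j : Fin N // (j : ℕ) < t}, ∀ h : (j : ℕ) < k, c j = ρ ⟨j, h⟩

def prefixSplice (σ : History Y N k) (c : History Y N t) : History Y N t :=
  fun j => if h : (j : ℕ) < k then σ ⟨j, h⟩ else c j

def laterOutputs (k : ℕ) (c : History Y N t) : Set (Traj X S Y N) :=
  {ω | ∀ j : {j : Fin N // (j : ℕ) < t}, k ≤ (j : ℕ) → ω.2.2 j = c j}

omit [Fintype Y] in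
lemma isPrefix_prefixSplice (σ : History Y N k) (c : History Y N t) :
    IsPrefix σ (prefixSplice σ c) :=
  fun _ h => dif_pos h

omit [Fintype Y] in
lemma prefixSplice_prefixSplice {ρ : History Y N k} {c : History Y N t} (hc : IsPrefix ρ c)
    (σ : History Y N k) :
    prefixSplice ρ (prefixSplice σ c) = c := by
  funext j
  unfold prefixSplice
  split_ifs with h
  · exact (hc j h).symm
  · rfl

omit [Fintype X] [Fintype S] [Fintype Y] in
lemma laterOutputs_prefixSplice (σ : History Y N k) (c : History Y N t) :
    laterOutputs (X := X) (S := S) k (prefixSplice σ c) = laterOutputs k c := by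
  ext ω
  refine forall_congr' fun j => imp_congr_right fun hj => ?_
  rw [prefixSplice, dif_neg (by omega)]

omit [Fintype X] [Fintype S] [Fintype Y] in
lemma setOf_outPrefix_eq (hkt : k ≤ t) {ρ : History Y N k} {c : History Y N t}
    (hc : IsPrefix ρ c) :
    {ω : Traj X S Y N | outPrefix t ω = c} = {ω | outPrefix k ω = ρ} ∩ laterOutputs k c := by
  ext ω
  simp only [Set.mem_ofPred_eq, Set.mem_inter_iff, laterOutputs, funext_iff, outPrefix]
  refine ⟨fun h => ⟨fun j => (h ⟨j, by have := j.2; omega⟩).trans (hc _ j.2),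
    fun j _ => h j⟩, fun h j => ?_⟩
  by_cases hj : (j : ℕ) < k
  · exact (h.1 ⟨j, hj⟩).trans (hc j hj).symm
  · exact h.2 j (by omega)

omit [Fintype X] [Fintype S] in
open Classical in
lemma sum_eq_sum_sum_isPrefix (hkt : k ≤ t) (f : History Y N t → ℝ) :
    ∑ c, f c = ∑ ρ : History Y N k, ∑ c with IsPrefix ρ c, f c := by
  rw [← Finset.sum_fiberwise Finset.univ
    (fun c : History Y N t => fun i : {j : Fin N // (j : ℕ) < k} =>
      c ⟨i, by have := i.2; omega⟩) f]
  refine Finset.sum_congr rfl fun ρ _ => Finset.sum_congr ?_ fun _ _ => rfl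
  ext c
  simp only [Finset.mem_filter, Finset.mem_univ, true_and, funext_iff]
  exact ⟨fun h j hj => h ⟨j, hj⟩, fun h i => h ⟨i, _⟩ i.2⟩

end PrefixDecomposition

section StageObjective

variable {N u v k : ℕ}

def termInput (v : ℕ) (t : Fin N) (ω : Traj X S Y N) :
    ({j : Fin N // (t : ℕ) ≤ (j : ℕ) + v ∧ (j : ℕ) ≤ (t : ℕ)} → X) ×
      ({j : Fin (N + 1) // (j : ℕ) + v = (t : ℕ)} → S) :=
  (fun j => ω.1 j.1, fun j => ω.2.1 j.1)

section Coordinates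

omit [Fintype X] [Fintype S] [Fintype Y]

lemma termInput_determinedBy_pastEq {t : Fin N} {T : ℕ} (ht : (t : ℕ) < T) :
    DeterminedBy (PastEq T) (termInput (X := X) (S := S) (Y := Y) v t) :=
  fun _ _ h => Prod.ext (funext fun j => h.1 j (by have := j.2; omega))
    (funext fun j => h.2.1 j (by have := j.2; omega))

lemma output_determinedBy_pastEq {t : Fin N} {T : ℕ} (ht : (t : ℕ) < T) :
    DeterminedBy (PastEq T) (fun ω : Traj X S Y N => ω.2.2 t) :=
  fun _ _ h => h.2.2 t ht

lemma termInput_determinedBy_tailEq {t : Fin N} (ht : k + u ≤ (t : ℕ)) :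
    DeterminedBy (TailEq u v k) (termInput (X := X) (S := S) (Y := Y) v t) :=
  fun _ _ h => Prod.ext (funext fun j => h.1 j (by have := j.2; omega))
    (funext fun j => h.2.1 j (by have := j.2; omega))

lemma output_determinedBy_tailEq {t : Fin N} (ht : k + u ≤ (t : ℕ)) :
    DeterminedBy (TailEq u v k) (fun ω : Traj X S Y N => ω.2.2 t) :=
  fun _ _ h => h.2.2 t (by omega)

lemma laterOutputs_determinedBy_tailEq {t : ℕ} (c : History Y N t) :
    DeterminedBy (TailEq (X := X) (S := S) u v k) (· ∈ laterOutputs k c) :=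
  fun _ _ h => propext (forall_congr' fun j => imp_congr_right fun hj => by rw [h.2.2 j hj])

end Coordinates

lemma objWin_eq_sum_condMI (ch : NCFSC X S Y) (src : Source X S Y N u) :
    objWin v ch src = ∑ t : Fin N,
      condMI (jointP ch src) (termInput v t) (fun ω => ω.2.2 t) (outPrefix t) :=
  rfl

open Classical in
/-- The part of the `t`-th term of `objWin` from the output histories starting with `ρ`. -/
def prefixPart (p : Traj X S Y N → ℝ) (v : ℕ) (t : Fin N) (ρ : History Y N k) : ℝ :=
  ∑ a, ∑ b, ∑ c with IsPrefix ρ c,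
    miTerm p {ω | termInput v t ω = a} {ω | ω.2.2 t = b} {ω | outPrefix t ω = c}

def tailValue (p : Traj X S Y N → ℝ) (u v k : ℕ) (ρ : History Y N k) : ℝ :=
  ∑ t ∈ Finset.univ.filter (fun t : Fin N => k + u ≤ (t : ℕ)), prefixPart p v t ρ

lemma condMI_eq_sum_prefixPart (p : Traj X S Y N → ℝ) {t : Fin N} (hkt : k ≤ (t : ℕ)) :
    condMI p (termInput v t) (fun ω => ω.2.2 t) (outPrefix t) =
      ∑ ρ : History Y N k, prefixPart p v t ρ := by
  rw [condMI_eq_sum_miTerm]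
  simp only [sum_eq_sum_sum_isPrefix hkt, prefixPart]
  exact (Finset.sum_comm.trans (Finset.sum_congr rfl fun _ _ => Finset.sum_comm)).symm

lemma objWin_eq_add_sum_tailValue (ch : NCFSC X S Y) (src : Source X S Y N u) (k : ℕ) :
    objWin v ch src =
      ∑ t ∈ Finset.univ.filter (fun t : Fin N => ¬ k + u ≤ (t : ℕ)),
          condMI (jointP ch src) (termInput v t) (fun ω => ω.2.2 t) (outPrefix t) +
        ∑ ρ : History Y N k, tailValue (jointP ch src) u v k ρ := by
  rw [objWin_eq_sum_condMI,
    ← Finset.sum_filter_not_add_sum_filter _ (fun t : Fin N => k + u ≤ (t : ℕ))]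
  refine congrArg _ ?_
  rw [Finset.sum_congr rfl fun t ht => condMI_eq_sum_prefixPart (k := k) _
    (by have := (Finset.mem_filter.mp ht).2; omega)]
  exact Finset.sum_comm

variable (ch : NCFSC X S Y) {src : Source X S Y N u}
  (rep : History Y N k → History Y N k)

lemma condMI_graft_of_lt (hN : k + u ≤ N) {t : Fin N} (ht : (t : ℕ) < k + u) :
    condMI (jointP ch (graft src k rep)) (termInput v t) (fun ω => ω.2.2 t) (outPrefix t) =
      condMI (jointP ch src) (termInput v t) (fun ω => ω.2.2 t) (outPrefix t) := by
  simp only [condMI_eq_sum_miTerm]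
  refine Finset.sum_congr rfl fun a _ => Finset.sum_congr rfl fun b _ =>
    Finset.sum_congr rfl fun c _ =>
      miTerm_congr (P := fun D => DeterminedBy (PastEq (k + u)) (· ∈ D))
      (fun _ _ => DeterminedBy.inter) ((termInput_determinedBy_pastEq ht).preimage a)
      ((output_determinedBy_pastEq ht).preimage b)
      ((outPrefix_determinedBy ht.le).preimage c) fun D hD => prE_graft_eq ch rep hN hD

lemma prefixPart_eq_zero {p : Traj X S Y N → ℝ} (hp : ∀ ω, 0 ≤ p ω)
    {ρ : History Y N k} (hρ : prE p {ω | outPrefix k ω = ρ} = 0) {t : Fin N}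
    (hkt : k ≤ (t : ℕ)) : prefixPart p v t ρ = 0 := by
  classical
  rw [prefixPart]
  refine Finset.sum_eq_zero fun a _ => Finset.sum_eq_zero fun b _ =>
    Finset.sum_eq_zero fun c hc => miTerm_eq_zero hp (prE_eq_zero_of_subset hp ?_ hρ)
  rw [setOf_outPrefix_eq hkt (Finset.mem_filter.mp hc).2]
  exact Set.inter_subset_left

lemma tailValue_eq_zero {p : Traj X S Y N → ℝ} (hp : ∀ ω, 0 ≤ p ω)
    {ρ : History Y N k} (hρ : prE p {ω | outPrefix k ω = ρ} = 0) :
    tailValue p u v k ρ = 0 :=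
  Finset.sum_eq_zero fun t ht =>
    prefixPart_eq_zero hp hρ (by have := (Finset.mem_filter.mp ht).2; omega)

lemma prefixPart_graft (huv : u ≤ v) (hN : k + u ≤ N) (hM : IsMarkov v src)
    (ρ : History Y N k) (hpos : 0 < prE (jointP ch src) {ω | outPrefix k ω = ρ})
    (hpos' : 0 < prE (jointP ch src) {ω | outPrefix k ω = rep ρ})
    (hα : posterior (jointP ch src) u v k ρ = posterior (jointP ch src) u v k (rep ρ))
    {t : Fin N} (ht : k + u ≤ (t : ℕ)) :
    prefixPart (jointP ch (graft src k rep)) v t ρ =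
      prE (jointP ch src) {ω | outPrefix k ω = ρ} /
          prE (jointP ch src) {ω | outPrefix k ω = rep ρ} *
        prefixPart (jointP ch src) v t (rep ρ) := by
  have hkt : k ≤ (t : ℕ) := by omega
  simp only [prefixPart, Finset.mul_sum]
  refine Finset.sum_congr rfl fun a _ => Finset.sum_congr rfl fun b _ => ?_
  refine Finset.sum_nbij' (prefixSplice (rep ρ)) (prefixSplice ρ) ?_ ?_ ?_ ?_ ?_ <;>
    simp only [Finset.mem_filter, Finset.mem_univ, true_and]
  · exact fun c _ => isPrefix_prefixSplice _ c
  · exact fun c _ => isPrefix_prefixSplice _ c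
  · exact fun c hc => prefixSplice_prefixSplice hc _
  · exact fun c hc => prefixSplice_prefixSplice hc _
  intro c hc
  rw [setOf_outPrefix_eq hkt hc, setOf_outPrefix_eq hkt (isPrefix_prefixSplice _ c),
    laterOutputs_prefixSplice]
  refine miTerm_inter_eq_mul (div_pos hpos hpos').ne'
    (P := fun D => DeterminedBy (TailEq u v k) (· ∈ D)) (fun _ _ => DeterminedBy.inter)
    ((termInput_determinedBy_tailEq ht).preimage a) ((output_determinedBy_tailEq ht).preimage b)
    (laterOutputs_determinedBy_tailEq c) fun D hD => ?_
  rw [div_mul_eq_mul_div, eq_div_iff hpos'.ne']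
  exact (prE_graft_inter_mul_eq ch rep huv hN hM ρ hpos hpos' hα hD).trans (mul_comm _ _)

lemma tailValue_graft (huv : u ≤ v) (hN : k + u ≤ N) (hM : IsMarkov v src)
    (ρ : History Y N k) (hpos : 0 < prE (jointP ch src) {ω | outPrefix k ω = ρ})
    (hpos' : 0 < prE (jointP ch src) {ω | outPrefix k ω = rep ρ})
    (hα : posterior (jointP ch src) u v k ρ = posterior (jointP ch src) u v k (rep ρ)) :
    tailValue (jointP ch (graft src k rep)) u v k ρ =
      prE (jointP ch src) {ω | outPrefix k ω = ρ} /
          prE (jointP ch src) {ω | outPrefix k ω = rep ρ} *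
        tailValue (jointP ch src) u v k (rep ρ) := by
  rw [tailValue, tailValue, Finset.mul_sum]
  exact Finset.sum_congr rfl fun t ht => prefixPart_graft ch rep huv hN hM ρ hpos hpos' hα
    (Finset.mem_filter.mp ht).2

/-- The terms before time `k + u` are unchanged, and the tail value of each prefix `ρ` becomes
`Pr ρ / Pr (rep ρ)` times that of `rep ρ`. -/
lemma objWin_le_objWin_graft (huv : u ≤ v) (hN : k + u ≤ N) (hM : IsMarkov v src)
    (hrep : ∀ ρ, 0 < prE (jointP ch src) {ω | outPrefix k ω = ρ} →
      0 < prE (jointP ch src) {ω | outPrefix k ω = rep ρ} ∧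
        posterior (jointP ch src) u v k ρ = posterior (jointP ch src) u v k (rep ρ) ∧
        tailValue (jointP ch src) u v k ρ / prE (jointP ch src) {ω | outPrefix k ω = ρ} ≤
          tailValue (jointP ch src) u v k (rep ρ) /
            prE (jointP ch src) {ω | outPrefix k ω = rep ρ}) :
    objWin v ch src ≤ objWin v ch (graft src k rep) := by
  rw [objWin_eq_add_sum_tailValue ch src k, objWin_eq_add_sum_tailValue ch _ k]
  refine add_le_add (Finset.sum_le_sum fun t ht => (condMI_graft_of_lt ch rep hN
    (not_le.mp (Finset.mem_filter.mp ht).2)).ge) (Finset.sum_le_sum fun ρ _ => ?_)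
  rcases (prE_nonneg (jointP_nonneg ch src) {ω | outPrefix k ω = ρ}).lt_or_eq with hρ | hρ
  · obtain ⟨hpos', hα, hle⟩ := hrep ρ hρ
    rw [tailValue_graft ch rep huv hN hM ρ hρ hpos' hα]
    calc tailValue (jointP ch src) u v k ρ
        = prE (jointP ch src) {ω | outPrefix k ω = ρ} * (tailValue (jointP ch src) u v k ρ /
            prE (jointP ch src) {ω | outPrefix k ω = ρ}) := (mul_div_cancel₀ _ hρ.ne').symm
      _ ≤ prE (jointP ch src) {ω | outPrefix k ω = ρ} * (tailValue (jointP ch src) u v k (rep ρ) /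
            prE (jointP ch src) {ω | outPrefix k ω = rep ρ}) := by gcongr
      _ = _ := by ring
  · rw [tailValue_eq_zero (jointP_nonneg ch src) hρ.symm, tailValue_eq_zero (jointP_nonneg ch _)
      ((prE_graft_eq ch rep hN ((outPrefix_determinedBy le_self_add).preimage ρ)).trans hρ.symm)]

end StageObjective

lemma exists_rep_maximizing {α β : Type} [Fintype α] (P : α → Prop) (key : α → β) (g : α → ℝ) :
    ∃ rep : α → α, (∀ a, P a → P (rep a) ∧ key a = key (rep a) ∧ g a ≤ g (rep a)) ∧
      ∀ a b, P a → P b → key a = key b → rep a = rep b := by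
  classical
  let cls : α → Finset α := fun a => Finset.univ.filter fun b => P b ∧ key b = key a
  let pick : Finset α → α → α := fun s d =>
    if h : s.Nonempty then (s.exists_max_image g h).choose else d
  have hne : ∀ a, P a → (cls a).Nonempty := fun a ha => ⟨a, by simp [cls, ha]⟩
  refine ⟨fun a => pick (cls a) a, fun a ha => ?_, fun a b ha hb hab => ?_⟩
  · obtain ⟨hmem, hmax⟩ := ((cls a).exists_max_image g (hne a ha)).choose_spec
    simp only [pick, dif_pos (hne a ha)]
    obtain ⟨hP, hkey⟩ := (Finset.mem_filter.mp hmem).2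
    exact ⟨hP, hkey.symm, hmax a (by simp [cls, ha])⟩
  · have hcls : cls a = cls b := by ext; simp [cls, hab]
    simp only [pick, hcls, dif_pos (hne b hb)]

section AlphaPolicy

variable {N u v k : ℕ}

def historyEvent (u : ℕ) (t : Fin N) (yh : Fin N → Y) : Set (Traj X S Y N) :=
  {ω | ∀ j : Fin N, (j : ℕ) + u + 1 ≤ (t : ℕ) → ω.2.2 j = yh j}

def windowEvent (u v : ℕ) (t : Fin N) (xf : Fin N → X) (sf : Fin (N + 1) → S) :
    Set (Traj X S Y N) :=
  {ω | (∀ j : Fin N, (t : ℕ) ≤ (j : ℕ) + v ∧ (j : ℕ) < (t : ℕ) → ω.1 j = xf j) ∧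
    ∀ j : Fin (N + 1), (t : ℕ) ≤ (j : ℕ) + v ∧ (j : ℕ) + u ≤ (t : ℕ) → ω.2.1 j = sf j}

def AlphaPolicyAt (v : ℕ) (ch : NCFSC X S Y) (src : Source X S Y N u) (t : Fin N) : Prop :=
  ∀ yh yh' : Fin N → Y,
    0 < prE (jointP ch src) (historyEvent u t yh) →
    0 < prE (jointP ch src) (historyEvent u t yh') →
    (∀ xf sf, condPr (jointP ch src) (windowEvent u v t xf sf) (historyEvent u t yh) =
      condPr (jointP ch src) (windowEvent u v t xf sf) (historyEvent u t yh')) →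
    ∀ xf sf a, src.pol t xf sf yh a = src.pol t xf sf yh' a

lemma alphaPolicy_iff_forall (ch : NCFSC X S Y) (src : Source X S Y N u) :
    AlphaPolicy v ch src ↔ ∀ t, AlphaPolicyAt v ch src t :=
  Iff.rfl

section Coordinates

omit [Fintype X] [Fintype S] [Fintype Y]

lemma historyEvent_eq {t : Fin N} (ht : (t : ℕ) = k + u) (yh : Fin N → Y) :
    historyEvent (X := X) (S := S) u t yh = {ω | outPrefix k ω = fun i => yh i.1} := by
  ext ω
  simp only [historyEvent, Set.mem_ofPred_eq, funext_iff, outPrefix, Subtype.forall]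
  exact ⟨fun h j hj => h j (by omega), fun h j hj => h j (by omega)⟩

lemma windowEvent_eq (t : Fin N) (ω₀ : Traj X S Y N) :
    windowEvent (Y := Y) u v t ω₀.1 ω₀.2.1 = {ω | window u v t ω = window u v t ω₀} := by
  ext ω
  simp only [windowEvent, Set.mem_ofPred_eq, window_eq_iff]
  exact ⟨fun h => ⟨fun j h₁ h₂ => h.1 j ⟨h₁, h₂⟩, fun j h₁ h₂ => h.2 j ⟨h₁, h₂⟩⟩,
    fun h => ⟨fun j hj => h.1 j hj.1 hj.2, fun j hj => h.2 j hj.1 hj.2⟩⟩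

lemma historyEvent_determinedBy {t : Fin N} {T : ℕ} (ht : (t : ℕ) < T) (yh : Fin N → Y) :
    DeterminedBy (PastEq T) (· ∈ historyEvent (X := X) (S := S) u t yh) :=
  fun _ _ h => propext (forall_congr' fun j => imp_congr_right fun hj => by
    rw [h.2.2 j (by omega)])

lemma windowEvent_determinedBy {t : Fin N} {T : ℕ} (ht : (t : ℕ) < T) (xf : Fin N → X)
    (sf : Fin (N + 1) → S) :
    DeterminedBy (PastEq T) (· ∈ windowEvent (Y := Y) u v t xf sf) :=
  fun _ _ h => propext (and_congr (forall_congr' fun j => imp_congr_right fun hj => by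
    rw [h.1 j (by omega)]) (forall_congr' fun j => imp_congr_right fun hj => by
    rw [h.2.1 j (by omega)]))

end Coordinates

lemma alphaPolicyAt_of_le (ch : NCFSC X S Y) (src : Source X S Y N u) {t : Fin N}
    (htu : (t : ℕ) ≤ u) : AlphaPolicyAt v ch src t := by
  intro yh yh' _ _ _ xf sf a
  rw [src.causal t xf xf sf sf yh yh' (fun _ _ => rfl) (fun _ _ => rfl) fun _ hj => by omega]

variable (ch : NCFSC X S Y)

lemma AlphaPolicyAt.of_pol_eq {src src' : Source X S Y N u} {T : ℕ} (hT : T ≤ N)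
    (hpol : ∀ i : Fin N, (i : ℕ) < T → src'.pol i = src.pol i) {t : Fin N} (ht : (t : ℕ) < T)
    (h : AlphaPolicyAt v ch src t) : AlphaPolicyAt v ch src' t := by
  have hprE : ∀ E, DeterminedBy (PastEq T) (· ∈ E) →
      prE (jointP ch src') E = prE (jointP ch src) E :=
    fun _ hE => prE_jointP_eq_of_pol_eq ch hT hpol hE
  intro yh yh' h₁ h₂ hα xf sf a
  rw [hprE _ (historyEvent_determinedBy ht _)] at h₁ h₂
  rw [hpol t ht]
  refine h yh yh' h₁ h₂ (fun xf sf => ?_) xf sf a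
  have hα := hα xf sf
  simp only [condPr] at hα ⊢
  rwa [hprE _ ((windowEvent_determinedBy ht xf sf).inter (historyEvent_determinedBy ht yh)),
    hprE _ ((windowEvent_determinedBy ht xf sf).inter (historyEvent_determinedBy ht yh')),
    hprE _ (historyEvent_determinedBy ht yh), hprE _ (historyEvent_determinedBy ht yh')] at hα

lemma posterior_eq_of_forall_condPr_eq {p : Traj X S Y N → ℝ} {t : Fin N} (ht : (t : ℕ) = k + u)
    {yh yh' : Fin N → Y}
    (h : ∀ xf sf, condPr p (windowEvent u v t xf sf) (historyEvent u t yh) =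
      condPr p (windowEvent u v t xf sf) (historyEvent u t yh')) :
    posterior p u v k (fun i => yh i.1) = posterior p u v k (fun i => yh' i.1) := by
  funext w
  by_cases hw : ∃ ω₀ : Traj X S Y N, window u v (k + u) ω₀ = w
  · obtain ⟨ω₀, rfl⟩ := hw
    have h := h ω₀.1 ω₀.2.1
    rwa [windowEvent_eq, ht, historyEvent_eq ht, historyEvent_eq ht] at h
  · have hempty : {ω : Traj X S Y N | window u v (k + u) ω = w} = ∅ :=
      Set.eq_empty_of_forall_notMem fun ω hω => hw ⟨ω, hω⟩
    simp [posterior, condPr, hempty, prE]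

lemma posterior_graft {src : Source X S Y N u} (hN : k + u ≤ N)
    (rep : History Y N k → History Y N k) :
    posterior (jointP ch (graft src k rep)) u v k = posterior (jointP ch src) u v k := by
  funext ρ w
  have hρ : DeterminedBy (PastEq (k + u)) (· ∈ {ω : Traj X S Y N | outPrefix k ω = ρ}) :=
    (outPrefix_determinedBy le_self_add).preimage ρ
  simp only [posterior, condPr]
  rw [prE_graft_eq ch rep hN (((window_determinedBy _).preimage w).inter hρ),
    prE_graft_eq ch rep hN hρ]

/-- At time `k + u` the grafted source reads the first `k` outputs only through `rep`. -/
lemma alphaPolicyAt_graft {src : Source X S Y N u} {t : Fin N} (ht : (t : ℕ) = k + u)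
    {rep : History Y N k → History Y N k}
    (hrep : ∀ ρ σ, 0 < prE (jointP ch src) {ω | outPrefix k ω = ρ} →
      0 < prE (jointP ch src) {ω | outPrefix k ω = σ} →
      posterior (jointP ch src) u v k ρ = posterior (jointP ch src) u v k σ → rep ρ = rep σ) :
    AlphaPolicyAt v ch (graft src k rep) t := by
  have hN : k + u ≤ N := ht ▸ t.is_lt.le
  intro yh yh' h₁ h₂ hα xf sf a
  have hpos : ∀ z : Fin N → Y, 0 < prE (jointP ch (graft src k rep)) (historyEvent u t z) →
      0 < prE (jointP ch src) {ω | outPrefix k ω = fun i => z i.1} := fun z hz => by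
    rwa [historyEvent_eq ht, prE_graft_eq ch rep hN
      ((outPrefix_determinedBy le_self_add).preimage _)] at hz
  have hρ := hrep _ _ (hpos yh h₁) (hpos yh' h₂) (by
    rw [← posterior_graft ch hN rep]
    exact posterior_eq_of_forall_condPr_eq ht hα)
  rw [graft_pol_of_le src rep ht.ge, graft_pol_of_le src rep ht.ge]
  refine congrFun (src.causal t xf xf sf sf _ _ (fun _ _ => rfl) (fun _ _ => rfl) fun j hj => ?_) a
  simp only [relabelPrefix, dif_pos (show (j : ℕ) < k by omega), hρ]

lemma exists_graft_objWin_le_alphaPolicyAt (huv : u ≤ v) {src : Source X S Y N u}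
    (hM : IsMarkov v src) (t : Fin N) (k : ℕ) (ht : (t : ℕ) = k + u) :
    ∃ src' : Source X S Y N u, IsMarkov v src' ∧
      (∀ i : Fin N, (i : ℕ) < t → src'.pol i = src.pol i) ∧
      objWin v ch src ≤ objWin v ch src' ∧ AlphaPolicyAt v ch src' t := by
  have hN : k + u ≤ N := ht ▸ t.is_lt.le
  obtain ⟨rep, hrep, hrep_eq⟩ := exists_rep_maximizing
    (fun ρ => 0 < prE (jointP ch src) {ω | outPrefix k ω = ρ}) (posterior (jointP ch src) u v k)
    fun ρ => tailValue (jointP ch src) u v k ρ / prE (jointP ch src) {ω | outPrefix k ω = ρ}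
  exact ⟨graft src k rep, hM.graft k rep, fun i hi => graft_pol_of_lt src rep (ht ▸ hi),
    objWin_le_objWin_graft ch rep huv hN hM hrep, alphaPolicyAt_graft ch ht hrep_eq⟩

lemma exists_objWin_le_alphaPolicyAt_of_lt (huv : u ≤ v) {src : Source X S Y N u}
    (hM : IsMarkov v src) {m : ℕ} (hm : m ≤ N) :
    ∃ src' : Source X S Y N u, IsMarkov v src' ∧ objWin v ch src ≤ objWin v ch src' ∧
      ∀ t : Fin N, (t : ℕ) < m → AlphaPolicyAt v ch src' t := by
  induction m with
  | zero => exact ⟨src, hM, le_rfl, fun t ht => absurd ht (Nat.not_lt_zero _)⟩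
  | succ m ih =>
    obtain ⟨src₁, hM₁, hle₁, hAP₁⟩ := ih (by omega)
    by_cases hmu : m ≤ u
    · refine ⟨src₁, hM₁, hle₁, fun t ht => ?_⟩
      rcases Nat.lt_succ_iff_lt_or_eq.mp ht with ht | ht
      · exact hAP₁ t ht
      · exact alphaPolicyAt_of_le ch src₁ (by omega)
    · obtain ⟨src₂, hM₂, hpol₂, hle₂, hAP₂⟩ :=
        exists_graft_objWin_le_alphaPolicyAt ch huv hM₁ ⟨m, by omega⟩ (m - u) (by simp; omega)
      refine ⟨src₂, hM₂, hle₁.trans hle₂, fun t ht => ?_⟩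
      rcases Nat.lt_succ_iff_lt_or_eq.mp ht with ht | ht
      · exact (hAP₁ t ht).of_pol_eq ch (by omega) hpol₂ ht
      · exact (Fin.ext ht : t = ⟨m, _⟩) ▸ hAP₂

end AlphaPolicy

/-- **Theorem 3, finite-horizon supremum form.** For a
non-controllable FSC and `0 ≤ u ≤ v`, the supremum of
`Σ_{t=1}^N I(X_{t-v}^t, S_{t-v-1}; Y_t | Y^{t-1})` over `v`-th order
conditional Markov sources is attained within the subclass `𝒫'_v(u,u)` of
sources whose policies depend on the output history only through the a
posteriori vector. -/
theorem statement15 {X S Y : Type} [Fintype X] [Fintype S] [Fintype Y] {N : ℕ}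
    (ch : NCFSC X S Y) (u v : ℕ) (huv : u ≤ v) :
    (⨆ src : {P : Source X S Y N u // IsMarkov v P}, objWin v ch src.1) =
      ⨆ src : {P : Source X S Y N u // IsMarkov v P ∧ AlphaPolicy v ch P},
        objWin v ch src.1 := by
  refine csSup_eq_csSup_of_forall_exists_le ?_ ?_
  · rintro _ ⟨⟨src, hM⟩, rfl⟩
    obtain ⟨src', hM', hle, hAP⟩ := exists_objWin_le_alphaPolicyAt_of_lt ch huv hM le_rfl
    exact ⟨_, ⟨⟨src', hM', (alphaPolicy_iff_forall ch src').mpr fun t => hAP t t.is_lt⟩, rfl⟩, hle⟩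
  · rintro _ ⟨⟨src, hM, -⟩, rfl⟩
    exact ⟨_, ⟨⟨src, hM⟩, rfl⟩, le_rfl⟩

end FSCPaper
end
end
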